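/- arXiv:math/0305415 — 4 statements merged into one kernel-verified Lean document; each statement's English description precedes it below -/
import Mathlib

section
/- In the special case m₁ = ⋯ = m_k = 1, the matrix A_k (first k−1 rows: n₁ in column 1, −n_{i+1} in column i+1; last row all ones) has |det A_k| = Σ_{i=1}^k Π_{j≠i} n_j. -/
/-- Conway's determinant formula for pretzel links (`m₁ = ⋯ = m_k = 1`): the matrix with
rows `n₁e₁ − n_{i+1}e_{i+1}` (`i = 1,…,k−1`) and last row `(1,…,1)` has
`|det| = Σ_i Π_{j≠i} n_j`. -/
theorem stmt6 (k : ℕ) (n : Fin (k + 2) → ℕ) (hn : ∀ i, 0 < n i)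
    (A : Matrix (Fin (k + 2)) (Fin (k + 2)) ℤ)
    (hA : ∀ i j, A i j =
      if i.val = k + 1 then 1
      else if j.val = 0 then (n 0 : ℤ)
      else if j.val = i.val + 1 then -(n j : ℤ)
      else 0) :
    A.det.natAbs = ∑ i, ∏ j ∈ Finset.univ.erase i, n j := by
  classical
  have hnQ : ∀ j, (n j : ℚ) ≠ 0 := fun j => Nat.cast_ne_zero.mpr (hn j).ne'
  set L : Fin (k + 2) := Fin.last (k + 1) with hLdef
  set Aq : Matrix (Fin (k + 2)) (Fin (k + 2)) ℚ := A.map (fun x => (x : ℚ)) with hAqdef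
  have hAq : ∀ i j, Aq i j =
      if i.val = k + 1 then 1
      else if j.val = 0 then (n 0 : ℚ)
      else if j.val = i.val + 1 then -(n j : ℚ)
      else 0 := by
    intro i j
    simp only [hAqdef, Matrix.map_apply, hA i j]
    split_ifs <;> push_cast <;> ring
  set C : Matrix (Fin (k + 2)) (Fin (k + 2)) ℚ := Aq.updateRow L (Pi.single 0 1) with hCdef
  have hC : ∀ i, i ≠ L → C i = Aq i := fun i hi => Matrix.updateRow_ne hi
  have hCL : C L = Pi.single 0 1 := Matrix.updateRow_self
  set σ : Equiv.Perm (Fin (k + 2)) := (finRotate (k + 2))⁻¹ with hσdef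
  have hσ1 : ∀ i, σ i + 1 = i := by
    intro i
    have h : (finRotate (k + 2)) ((finRotate (k + 2))⁻¹ i) = i := Equiv.apply_symm_apply _ i
    rwa [finRotate_succ_apply] at h
  have hval : ∀ i : Fin (k + 2), (i : ℕ) = if σ i = Fin.last (k + 1) then 0 else (σ i).val + 1 := by
    intro i
    conv_lhs => rw [← hσ1 i]
    rw [Fin.val_add_one]
  set D : Matrix (Fin (k + 2)) (Fin (k + 2)) ℚ := C.submatrix σ id with hDdef
  have hDtri : D.BlockTriangular OrderDual.toDual := by
    intro i j hij
    have hij' : (i : ℕ) < (j : ℕ) := hij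
    show C (σ i) j = 0
    by_cases hσL : σ i = Fin.last (k + 1)
    · have hi0 : (i : ℕ) = 0 := by rw [hval i, if_pos hσL]
      rw [hσL, ← hLdef, hCL]
      have hj0 : (j : ℕ) ≠ 0 := by omega
      exact Pi.single_eq_of_ne (fun h => hj0 (by rw [h]; rfl)) _
    · have hiv : (i : ℕ) = (σ i).val + 1 := by rw [hval i, if_neg hσL]
      have hσlt : (σ i).val < k + 1 := Fin.val_lt_last hσL
      rw [hC _ hσL, hAq]
      rw [if_neg (by omega), if_neg (by omega), if_neg (by omega)]
  have hdiag : ∀ i : Fin (k + 2), D i i = if (i : ℕ) = 0 then 1 else -(n i : ℚ) := by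
    intro i
    show C (σ i) i = _
    by_cases hσL : σ i = Fin.last (k + 1)
    · have hi0 : (i : ℕ) = 0 := by rw [hval i, if_pos hσL]
      have hi0' : i = 0 := Fin.ext hi0
      rw [hσL, ← hLdef, hCL, if_pos hi0, hi0']
      exact Pi.single_eq_same 0 1
    · have hiv : (i : ℕ) = (σ i).val + 1 := by rw [hval i, if_neg hσL]
      have hσlt : (σ i).val < k + 1 := Fin.val_lt_last hσL
      rw [hC _ hσL, hAq, if_neg (by omega), if_neg (by omega), if_pos hiv, if_neg (by omega)]
  set P : ℚ := ∏ i : Fin (k + 1), (n i.succ : ℚ) with hPdef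
  have hdetD : D.det = (-1 : ℚ) ^ (k + 1) * P := by
    rw [Matrix.det_of_lowerTriangular D hDtri,
      Finset.prod_congr rfl (fun i _ => hdiag i), Fin.prod_univ_succ]
    have h0 : ((0 : Fin (k + 2)) : ℕ) = 0 := rfl
    rw [if_pos h0, one_mul]
    calc (∏ i : Fin (k + 1), if ((i.succ : Fin (k + 2)) : ℕ) = 0 then (1 : ℚ) else -(n i.succ : ℚ))
        = ∏ i : Fin (k + 1), (-1) * (n i.succ : ℚ) := by
          refine Finset.prod_congr rfl fun i _ => ?_
          rw [if_neg (by simp [Fin.val_succ]), neg_one_mul]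
      _ = (∏ _i : Fin (k + 1), (-1 : ℚ)) * P := Finset.prod_mul_distrib
      _ = (-1 : ℚ) ^ (k + 1) * P := by
          rw [Finset.prod_const, Finset.card_univ, Fintype.card_fin]
  have hdetC : C.det = P := by
    have h1 : D.det = ((Equiv.Perm.sign σ : ℤ) : ℚ) * C.det := by
      rw [hDdef]; exact_mod_cast Matrix.det_permute σ C
    have hsign : ((Equiv.Perm.sign σ : ℤ) : ℚ) = (-1 : ℚ) ^ (k + 1) := by
      rw [hσdef, map_inv, sign_finRotate]
      push_cast
      simp
    rw [hsign] at h1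
    have := h1.symm.trans hdetD
    exact mul_left_cancel₀ (pow_ne_zero _ (by norm_num)) this
  set a : ℚ := 1 + ∑ i : Fin (k + 1), (n 0 : ℚ) / (n i.succ) with hadef
  set d : Fin (k + 2) → ℚ := fun r =>
    if h : (r : ℕ) < k + 1 then -((n ⟨r.val + 1, by omega⟩ : ℚ))⁻¹ else 0 with hddef
  have hcs : ∀ i : Fin (k + 1), (i.castSucc : Fin (k + 2)) ≠ L := by
    intro i h
    have h2 := congrArg Fin.val h
    have h3 := i.isLt
    simp [hLdef, Fin.coe_castSucc, Fin.val_last] at h2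
    omega
  have hd : ∀ i : Fin (k + 1), d i.castSucc = -((n i.succ : ℚ))⁻¹ := by
    intro i
    have hi : ((i.castSucc : Fin (k + 2)) : ℕ) < k + 1 := by
      simpa [Fin.coe_castSucc] using i.isLt
    rw [hddef]
    simp only [dif_pos hi]
    congr 2
  have hAqc : ∀ (i : Fin (k + 1)) (j : Fin (k + 2)), Aq i.castSucc j =
      if (j : ℕ) = 0 then (n 0 : ℚ) else if (j : ℕ) = (i : ℕ) + 1 then -(n j : ℚ) else 0 := by
    intro i j
    have hi := i.isLt
    simp only [hAq, Fin.coe_castSucc]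
    rw [if_neg (by omega)]
  have herase : ∀ f : Fin (k + 2) → ℚ,
      ∑ r ∈ Finset.univ.erase L, f r = ∑ i : Fin (k + 1), f i.castSucc := by
    intro f
    rw [Finset.sum_erase_eq_sub (Finset.mem_univ L), Fin.sum_univ_castSucc, hLdef,
      add_sub_cancel_right]
  have hAqrow : ∀ j, Aq L j = 1 := by
    intro j
    rw [hAq, if_pos (by simp [hLdef])]
  have hmain : Aq = C.updateRow L (a • C L + ∑ r ∈ Finset.univ.erase L, d r • C r) := by
    ext i j
    rw [Matrix.updateRow_apply]
    by_cases hi : i = L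
    · rw [if_pos hi, hi, hAqrow]
      have hrw : (a • C L + ∑ r ∈ Finset.univ.erase L, d r • C r) j
          = a * (Pi.single 0 1 : Fin (k + 2) → ℚ) j
            + ∑ i : Fin (k + 1), -((n i.succ : ℚ))⁻¹ * Aq i.castSucc j := by
        rw [Pi.add_apply, Pi.smul_apply, Finset.sum_apply, hCL, smul_eq_mul,
          herase (fun r => (d r • C r) j)]
        congr 1
        refine Finset.sum_congr rfl fun i _ => ?_
        rw [Pi.smul_apply, smul_eq_mul, hd i, hC _ (hcs i)]
      rw [hrw]
      by_cases hj : (j : ℕ) = 0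
      · have hj0 : j = 0 := Fin.ext hj
        subst hj0
        rw [Pi.single_eq_same]
        have hterm : ∀ i : Fin (k + 1),
            -((n i.succ : ℚ))⁻¹ * Aq i.castSucc 0 = -((n 0 : ℚ) / (n i.succ)) := by
          intro i
          rw [hAqc, if_pos (show ((0 : Fin (k + 2)) : ℕ) = 0 from rfl), div_eq_mul_inv]
          ring
        rw [Finset.sum_congr rfl fun i _ => hterm i, Finset.sum_neg_distrib, hadef]
        ring
      · rw [Pi.single_eq_of_ne (fun h => hj (by rw [h]; rfl))]
        have hjlt := j.isLt
        set jp : Fin (k + 1) := ⟨(j : ℕ) - 1, by omega⟩ with hjpdef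
        have hterm : ∀ i : Fin (k + 1),
            -((n i.succ : ℚ))⁻¹ * Aq i.castSucc j = if i = jp then 1 else 0 := by
          intro i
          rw [hAqc, if_neg hj]
          by_cases hij : (j : ℕ) = (i : ℕ) + 1
          · have hji : i = jp := Fin.ext (by simp [hjpdef]; omega)
            have hsj : (i.succ : Fin (k + 2)) = j := Fin.ext (by simp [Fin.val_succ]; omega)
            rw [if_pos hij, if_pos hji, hsj, neg_mul_neg, inv_mul_cancel₀ (hnQ j)]
          · rw [if_neg hij, mul_zero, if_neg]
            intro h
            apply hij
            have := congrArg Fin.val h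
            simp [hjpdef] at this
            omega
        rw [Finset.sum_congr rfl fun i _ => hterm i, Finset.sum_ite_eq' Finset.univ jp]
        simp
    · rw [if_neg hi, hC _ hi]
  have hdetAq : Aq.det = a * P := by
    rw [hmain,
      Matrix.det_updateRow_sum_aux C (Finset.univ.erase L) (Finset.univ.notMem_erase L) d a,
      hdetC, smul_eq_mul]
  have hsum : a * P = ∑ i : Fin (k + 2), ∏ j ∈ Finset.univ.erase i, (n j : ℚ) := by
    have hfull : ∀ i : Fin (k + 2),
        (n i : ℚ) * ∏ j ∈ Finset.univ.erase i, (n j : ℚ) = ∏ j : Fin (k + 2), (n j : ℚ) :=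
      fun i => Finset.mul_prod_erase Finset.univ (fun j => (n j : ℚ)) (Finset.mem_univ i)
    have hP0 : ∏ j : Fin (k + 2), (n j : ℚ) = (n 0 : ℚ) * P := by
      rw [Fin.prod_univ_succ, hPdef]
    have hE0 : ∏ j ∈ Finset.univ.erase (0 : Fin (k + 2)), (n j : ℚ) = P :=
      mul_left_cancel₀ (hnQ 0) (by rw [hfull 0, hP0])
    have hEsucc : ∀ i : Fin (k + 1),
        ∏ j ∈ Finset.univ.erase (i.succ : Fin (k + 2)), (n j : ℚ)
          = (n 0 : ℚ) / (n i.succ) * P := by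
      intro i
      apply mul_left_cancel₀ (hnQ i.succ)
      rw [hfull i.succ, hP0]
      field_simp
      exact (mul_div_cancel_right₀ _ (hnQ i.succ)).symm
    rw [Fin.sum_univ_succ, hE0, hadef, add_mul, one_mul, Finset.sum_mul]
    congr 1
    exact Finset.sum_congr rfl fun i _ => (hEsucc i).symm
  have hcast : (A.det : ℚ) = Aq.det := by
    rw [hAqdef]
    simpa using RingHom.map_det (Int.castRingHom ℚ) A
  have hfinal : (A.det : ℚ) = ((∑ i, ∏ j ∈ Finset.univ.erase i, n j : ℕ) : ℚ) := by
    rw [hcast, hdetAq, hsum]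
    push_cast
    rfl
  have hZ : A.det = ((∑ i, ∏ j ∈ Finset.univ.erase i, n j : ℕ) : ℤ) := by
    exact_mod_cast hfinal
  rw [hZ, Int.natAbs_natCast]
end

section
/- For the matrix A_k of Proposition 8 (rows n₁e₁ − n_{i+1}e_{i+1} for i = 1,…,k−1, last row (m₁,…,m_k)), the gcd of all (k−1)×(k−1) minors of A_k equals D₁ = gcd over all index sets of the products obtained from n₁⋯n_{i-1}·m_i·n_{i+1}⋯n_k by deleting one factor. -/
open Finset Matrix

lemma sa_val {s : ℕ} (p : Fin (s+1)) (q : Fin s) :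
    (p.succAbove q).val = if q.val < p.val then q.val else q.val + 1 := by
  rw [Fin.succAbove]
  by_cases h : q.castSucc < p
  · rw [if_pos h, Fin.coe_castSucc, if_pos (by simpa [Fin.lt_def] using h)]
  · rw [if_neg h, Fin.val_succ, if_neg (by simpa [Fin.lt_def] using h)]

lemma sa_spec {s : ℕ} (p : Fin (s+1)) (q : Fin s) :
    (q.val < p.val ∧ (p.succAbove q).val = q.val) ∨
    (p.val ≤ q.val ∧ (p.succAbove q).val = q.val + 1) := by
  rw [sa_val]
  by_cases h : q.val < p.val
  · left; exact ⟨h, if_pos h⟩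
  · right; exact ⟨by omega, if_neg h⟩

lemma natAbs_prod {α : Type*} (s : Finset α) (f : α → ℤ) :
    (∏ i ∈ s, f i).natAbs = ∏ i ∈ s, (f i).natAbs :=
  map_prod Int.natAbsHom f s

lemma img_sa {s : ℕ} (c : Fin (s+1)) :
    Finset.image c.succAbove Finset.univ = Finset.univ.erase c := by
  ext x
  simp only [mem_image, mem_univ, true_and, mem_erase, and_true]
  constructor
  · rintro ⟨i, rfl⟩; exact Fin.succAbove_ne c i
  · intro hx; exact Fin.exists_succAbove_eq hx

lemma RI {s : ℕ} {M : Type*} [CommMonoid M] (c : Fin (s+1)) (g : Fin (s+1) → M) :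
    ∏ j ∈ Finset.univ.erase c, g j = ∏ i : Fin s, g (c.succAbove i) := by
  rw [← img_sa c, Finset.prod_image (fun a _ b _ h => Fin.succAbove_right_injective h)]

lemma RIS {s : ℕ} {M : Type*} [CommMonoid M] (c : Fin (s+1)) (S : Finset (Fin s))
    (g : Fin (s+1) → M) :
    ∏ j ∈ S, g (c.succAbove j) = ∏ l ∈ S.image c.succAbove, g l :=
  (Finset.prod_image (fun a _ b _ h => Fin.succAbove_right_injective h)).symm

lemma RI2 {s : ℕ} {M : Type*} [CommMonoid M] (c : Fin (s+1)) (x : Fin s) (g : Fin (s+1) → M) :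
    ∏ j ∈ Finset.univ.erase x, g (c.succAbove j)
      = ∏ l ∈ (Finset.univ.erase c).erase (c.succAbove x), g l := by
  rw [RIS c _ g, Finset.image_erase Fin.succAbove_right_injective, img_sa]

/-- unique-nonzero-pattern determinant -/
lemma Gdet {s : ℕ} (M : Matrix (Fin s) (Fin s) ℤ) (v : Fin s → ℕ)
    (hex : ∀ q, ∃ p, M p q ≠ 0)
    (hrow : ∀ p q q', M p q ≠ 0 → M p q' ≠ 0 → q = q')
    (hcol : ∀ p p' q, M p q ≠ 0 → M p' q ≠ 0 → p = p')
    (hval : ∀ p q, M p q ≠ 0 → (M p q).natAbs = v q) :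
    (M.det).natAbs = ∏ q, v q := by
  classical
  have f : ∀ q, {p : Fin s // M p q ≠ 0} := fun q => ⟨(hex q).choose, (hex q).choose_spec⟩
  set F : Fin s → Fin s := fun q => (f q).1 with hF
  have hinj : Function.Injective F := by
    intro q q' h
    exact hrow (F q) q q' (f q).2 (by rw [h]; exact (f q').2)
  let e : Equiv.Perm (Fin s) := Equiv.ofBijective F (Finite.injective_iff_bijective.mp hinj)
  have hdiag : M.submatrix (⇑e) id = Matrix.diagonal (fun q => M (F q) q) := by
    ext p q
    by_cases h : p = q
    · subst h; simp [Matrix.diagonal, e, Equiv.ofBijective]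
    · have : M (F p) q = 0 := by
        by_contra hne
        exact h (hinj (hcol (F p) (F q) q hne (f q).2))
      simp [Matrix.diagonal, h, e, Equiv.ofBijective, this]
  have key := Matrix.det_permute e M
  rw [hdiag, Matrix.det_diagonal] at key
  have h2 : (M.det).natAbs = (∏ i, M (F i) i).natAbs := by
    rw [key]
    rcases Int.units_eq_one_or (Equiv.Perm.sign e) with h | h <;> simp [h]
  rw [h2, natAbs_prod]
  exact Finset.prod_congr rfl fun q _ => hval _ _ (f q).2

lemma P1 {s : ℕ} (M : Matrix (Fin (s+1)) (Fin (s+1)) ℤ) (r c : Fin (s+1))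
    (h : ∀ i, i ≠ r → M i c = 0) :
    (M.det).natAbs = (M r c).natAbs * ((M.submatrix r.succAbove c.succAbove).det).natAbs := by
  rw [Matrix.det_succ_column M c, Finset.sum_eq_single r]
  · rw [Int.natAbs_mul, Int.natAbs_mul]
    simp [Int.natAbs_pow]
  · intro i _ hi; rw [h i hi]; ring
  · simp

lemma P1row {s : ℕ} (M : Matrix (Fin (s+1)) (Fin (s+1)) ℤ) (r c : Fin (s+1))
    (h : ∀ j, j ≠ c → M r j = 0) :
    (M.det).natAbs = (M r c).natAbs * ((M.submatrix r.succAbove c.succAbove).det).natAbs := by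
  have := P1 Mᵀ c r (fun j hj => h j hj)
  rw [Matrix.det_transpose] at this
  rw [this]
  congr 1
  rw [← Matrix.transpose_submatrix, Matrix.det_transpose]

lemma dvd_prod_of_pattern {s : ℕ} (g : Fin s → ℤ) (v : Fin s → ℕ)
    (h : ∀ q, g q = 0 ∨ (g q).natAbs = v q) :
    ((∏ q, v q : ℕ) : ℤ) ∣ ∏ q, g q := by
  by_cases hz : ∃ q, g q = 0
  · obtain ⟨q, hq⟩ := hz
    rw [Finset.prod_eq_zero (Finset.mem_univ q) hq]
    exact dvd_zero _
  · push_neg at hz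
    have habs : (∏ q, g q).natAbs = ∏ q, v q := by
      rw [natAbs_prod]
      exact Finset.prod_congr rfl fun q _ => (h q).resolve_left (hz q)
    rcases Int.natAbs_eq (∏ q, g q) with he | he
    · rw [he, habs]
    · rw [he, habs]; exact dvd_neg.mpr dvd_rfl

lemma T2 {s : ℕ} (M : Matrix (Fin s) (Fin s) ℤ) (v : Fin s → ℕ)
    (h : ∀ p q, M p q = 0 ∨ (M p q).natAbs = v q) :
    ((∏ q, v q : ℕ) : ℤ) ∣ M.det := by
  classical
  rw [Matrix.det_apply]
  refine Finset.dvd_sum fun σ _ => ?_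
  rw [Units.smul_def, zsmul_eq_mul]
  exact Dvd.dvd.mul_left (dvd_prod_of_pattern (fun q => M (σ q) q) v (fun q => h (σ q) q)) _

section Montesinos

variable {k : ℕ} {n m : Fin (k+2) → ℕ} {A : Matrix (Fin (k+2)) (Fin (k+2)) ℤ}

def HypA (k : ℕ) (n m : Fin (k+2) → ℕ) (A : Matrix (Fin (k+2)) (Fin (k+2)) ℤ) : Prop :=
  ∀ i j, A i j =
      if i.val = k + 1 then (m j : ℤ)
      else if j.val = 0 then (n 0 : ℤ)
      else if j.val = i.val + 1 then -(n j : ℤ)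
      else 0

lemma entry_m (hA : HypA k n m A) (i j : Fin (k+2)) (h : i.val = k+1) : A i j = (m j : ℤ) := by
  rw [hA, if_pos h]

lemma entry_0 (hA : HypA k n m A) (i j : Fin (k+2)) (h1 : i.val ≠ k+1) (h2 : j.val ≠ 0)
    (h3 : j.val ≠ i.val + 1) : A i j = 0 := by
  rw [hA, if_neg h1, if_neg h2, if_neg h3]

lemma entry_n (hA : HypA k n m A) (hn : ∀ i, 0 < n i) (i j : Fin (k+2)) (h1 : i.val ≠ k+1)
    (h2 : j.val = 0 ∨ j.val = i.val + 1) : (A i j).natAbs = n j ∧ A i j ≠ 0 := by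
  rcases h2 with h2 | h2
  · have hj : j = (0 : Fin (k+2)) := Fin.ext h2
    subst hj
    rw [hA, if_neg h1, if_pos (Fin.val_zero _)]
    exact ⟨by simp, by exact_mod_cast (hn 0).ne'⟩
  · have h2' : j.val ≠ 0 := by omega
    rw [hA, if_neg h1, if_neg h2', if_pos h2]
    refine ⟨by simp, ?_⟩
    simp only [ne_eq, neg_eq_zero]
    exact_mod_cast (hn j).ne'

lemma entry_nz (hA : HypA k n m A) (i j : Fin (k+2)) (h1 : i.val ≠ k+1) (h2 : A i j ≠ 0) :
    j.val = 0 ∨ j.val = i.val + 1 := by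
  by_contra hc
  push_neg at hc
  exact h2 (entry_0 hA i j h1 hc.1 hc.2)

lemma sa0 {s : ℕ} (b : Fin (s+2)) (h : b.val ≠ 0) : b.succAbove (0 : Fin (s+1)) = 0 := by
  apply Fin.ext
  have e := sa_spec b (0 : Fin (s+1))
  have h1 : ((0:Fin (s+1)).val) = 0 := rfl
  have h2 : ((0:Fin (s+2)).val) = 0 := rfl
  omega

end Montesinos

set_option maxHeartbeats 1000000 in
lemma wordII_step1 {k : ℕ} {n m : Fin (k+2) → ℕ} {A : Matrix (Fin (k+2)) (Fin (k+2)) ℤ}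
    (hA : HypA k n m A) (a b : Fin (k+2)) (ha0 : a.val ≠ 0)
    (r : Fin (k+2)) (hrv : r.val = a.val - 1)
    (ja : Fin (k+1)) (hja : b.succAbove ja = a) :
    ((A.submatrix r.succAbove b.succAbove).det).natAbs = m a *
      (((A.submatrix r.succAbove b.succAbove).submatrix
        (Fin.last k).succAbove ja.succAbove).det).natAbs := by
  have hz : ∀ i, i ≠ Fin.last k → (A.submatrix r.succAbove b.succAbove) i ja = 0 := by
    intro i hi
    have hiv : i.val ≠ k := fun h => hi (Fin.ext h)
    show A (r.succAbove i) (b.succAbove ja) = 0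
    rw [hja]
    have e1 := sa_spec r i
    have hrne : (r.succAbove i).val ≠ r.val :=
      fun h => Fin.succAbove_ne r i (Fin.ext h)
    have := a.isLt
    exact entry_0 hA _ _ (by omega) (by omega) (by omega)
  have hval : ((A.submatrix r.succAbove b.succAbove) (Fin.last k) ja).natAbs = m a := by
    show (A (r.succAbove (Fin.last k)) (b.succAbove ja)).natAbs = m a
    rw [hja, entry_m hA]
    · simp
    · have e1 := sa_spec r (Fin.last k)
      have hl : (Fin.last k).val = k := rfl
      have := a.isLt
      omega
  rw [P1 _ (Fin.last k) ja hz, hval]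

set_option maxHeartbeats 1000000 in
lemma wordII_gdet0 {k : ℕ} {n m : Fin (k+2) → ℕ} {A : Matrix (Fin (k+2)) (Fin (k+2)) ℤ}
    (hA : HypA k n m A) (hn : ∀ i, 0 < n i) (a b : Fin (k+2)) (ha0 : a.val ≠ 0) (hb0 : b.val = 0)
    (r : Fin (k+2)) (hrv : r.val = a.val - 1)
    (ja : Fin (k+1)) (hja : b.succAbove ja = a) :
    (((A.submatrix r.succAbove b.succAbove).submatrix
        (Fin.last k).succAbove ja.succAbove).det).natAbs
      = ∏ q : Fin k, n (b.succAbove (ja.succAbove q)) := by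
  have hjav : (b.succAbove ja).val = a.val := by rw [hja]
  have hrowne : ∀ p : Fin k, (r.succAbove ((Fin.last k).succAbove p)).val ≠ k+1 := by
    intro p
    have e1 := sa_spec (Fin.last k) p
    have e2 := sa_spec r ((Fin.last k).succAbove p)
    have hl : (Fin.last k).val = k := rfl
    have := a.isLt
    omega
  have hcol0 : ∀ q : Fin k, (b.succAbove (ja.succAbove q)).val ≠ 0 := by
    intro q
    have e1 := sa_spec ja q
    have e2 := sa_spec b (ja.succAbove q)
    omega
  have hcola : ∀ q : Fin k, (b.succAbove (ja.succAbove q)).val ≠ a.val := by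
    intro q h
    have h2 : b.succAbove (ja.succAbove q) = b.succAbove ja :=
      (Fin.ext (h.trans hjav.symm))
    exact Fin.succAbove_ne ja q (Fin.succAbove_right_injective h2)
  apply Gdet
  · intro q
    have hclt : (b.succAbove (ja.succAbove q)).val < k+2 := Fin.isLt _
    have hcv0 := hcol0 q
    have hcva := hcola q
    set cv := (b.succAbove (ja.succAbove q)).val with hcv
    set y : Fin (k+2) := ⟨cv - 1, by omega⟩ with hy
    have hyv : y.val = cv - 1 := rfl
    have hyne : y ≠ r := by
      intro h
      have h2 := congrArg Fin.val h
      rw [hrv, hyv] at h2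
      omega
    obtain ⟨u, hu⟩ := Fin.exists_succAbove_eq hyne
    have huval : u.val ≠ k := by
      intro h
      have e1 := sa_spec r u
      have h2 := congrArg Fin.val hu
      rw [hyv] at h2
      omega
    set p : Fin k := ⟨u.val, by omega⟩ with hp
    have hcast : (Fin.last k).succAbove p = u := by
      apply Fin.ext
      have e1 := sa_spec (Fin.last k) p
      have hl : (Fin.last k).val = k := rfl
      have hpv : p.val = u.val := rfl
      omega
    refine ⟨p, ?_⟩
    show A (r.succAbove ((Fin.last k).succAbove p)) (b.succAbove (ja.succAbove q)) ≠ 0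
    rw [hcast, hu]
    refine (entry_n hA hn _ _ (by rw [hyv]; omega) (Or.inr (by rw [hyv]; omega))).2
  · intro p q q' hq hq'
    have c1 := entry_nz hA _ _ (hrowne p) hq
    have c2 := entry_nz hA _ _ (hrowne p) hq'
    have h1 := hcol0 q
    have h2 := hcol0 q'
    have h3 : b.succAbove (ja.succAbove q) = b.succAbove (ja.succAbove q') :=
      Fin.ext (by omega)
    exact Fin.succAbove_right_injective (Fin.succAbove_right_injective h3)
  · intro p p' q hp hp'
    have c1 := entry_nz hA _ _ (hrowne p) hp
    have c2 := entry_nz hA _ _ (hrowne p') hp'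
    have h1 := hcol0 q
    have h3 : r.succAbove ((Fin.last k).succAbove p) =
        r.succAbove ((Fin.last k).succAbove p') := Fin.ext (by omega)
    exact Fin.succAbove_right_injective (Fin.succAbove_right_injective h3)
  · intro p q hq
    exact (entry_n hA hn _ _ (hrowne p) (entry_nz hA _ _ (hrowne p) hq)).1

set_option maxHeartbeats 1000000 in
lemma wordII_step2 {k' : ℕ} {n m : Fin (k'+1+2) → ℕ} {A : Matrix (Fin (k'+1+2)) (Fin (k'+1+2)) ℤ}
    (hA : HypA (k'+1) n m A) (hn : ∀ i, 0 < n i) (b : Fin (k'+1+2)) (hb0 : b.val ≠ 0)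
    (r : Fin (k'+1+2)) (ja : Fin (k'+1+1))
    (ib : Fin (k'+1)) (hibrow : (r.succAbove ((Fin.last (k'+1)).succAbove ib)).val = b.val - 1)
    (j0 : Fin (k'+1)) (hj0v : b.succAbove (ja.succAbove j0) = (0 : Fin (k'+1+2))) :
    (((A.submatrix r.succAbove b.succAbove).submatrix
        (Fin.last (k'+1)).succAbove ja.succAbove).det).natAbs = n 0 *
      ((((A.submatrix r.succAbove b.succAbove).submatrix
        (Fin.last (k'+1)).succAbove ja.succAbove).submatrix ib.succAbove j0.succAbove).det).natAbs := by
  have hblt := b.isLt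
  have hz : ∀ q, q ≠ j0 →
      ((A.submatrix r.succAbove b.succAbove).submatrix
        (Fin.last (k'+1)).succAbove ja.succAbove) ib q = 0 := by
    intro q hq
    show A (r.succAbove ((Fin.last (k'+1)).succAbove ib)) (b.succAbove (ja.succAbove q)) = 0
    have hcol0 : (b.succAbove (ja.succAbove q)).val ≠ 0 := by
      intro h
      have h2 : b.succAbove (ja.succAbove q) = b.succAbove (ja.succAbove j0) :=
        Fin.ext (by rw [h, hj0v]; rfl)
      exact hq (Fin.succAbove_right_injective (Fin.succAbove_right_injective h2))
    have hcolb : (b.succAbove (ja.succAbove q)).val ≠ b.val :=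
      fun h => Fin.succAbove_ne b _ (Fin.ext h)
    exact entry_0 hA _ _ (by rw [hibrow]; omega) hcol0 (by rw [hibrow]; omega)
  have hval : (((A.submatrix r.succAbove b.succAbove).submatrix
      (Fin.last (k'+1)).succAbove ja.succAbove) ib j0).natAbs = n 0 := by
    show (A (r.succAbove ((Fin.last (k'+1)).succAbove ib))
        (b.succAbove (ja.succAbove j0))).natAbs = n 0
    rw [hj0v]
    exact (entry_n hA hn _ _ (by rw [hibrow]; omega) (Or.inl rfl)).1
  rw [P1row _ ib j0 hz, hval]

set_option maxHeartbeats 1000000 in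
lemma wordII_gdet {k' : ℕ} {n m : Fin (k'+1+2) → ℕ} {A : Matrix (Fin (k'+1+2)) (Fin (k'+1+2)) ℤ}
    (hA : HypA (k'+1) n m A) (hn : ∀ i, 0 < n i) (a b : Fin (k'+1+2))
    (ha0 : a.val ≠ 0) (hab : a ≠ b) (hb0 : b.val ≠ 0)
    (r : Fin (k'+1+2)) (hrv : r.val = a.val - 1)
    (ja : Fin (k'+1+1)) (hja : b.succAbove ja = a)
    (ib : Fin (k'+1)) (hibrow : (r.succAbove ((Fin.last (k'+1)).succAbove ib)).val = b.val - 1)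
    (j0 : Fin (k'+1)) (hj0v : b.succAbove (ja.succAbove j0) = (0 : Fin (k'+1+2))) :
    ((((A.submatrix r.succAbove b.succAbove).submatrix
        (Fin.last (k'+1)).succAbove ja.succAbove).submatrix
          ib.succAbove j0.succAbove).det).natAbs
      = ∏ q : Fin k', n (b.succAbove (ja.succAbove (j0.succAbove q))) := by
  have hjav : (b.succAbove ja).val = a.val := by rw [hja]
  have hrowne : ∀ p : Fin k',
      (r.succAbove ((Fin.last (k'+1)).succAbove (ib.succAbove p))).val ≠ k'+1+1 := by
    intro p
    have e0 := sa_spec ib p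
    have e1 := sa_spec (Fin.last (k'+1)) (ib.succAbove p)
    have e2 := sa_spec r ((Fin.last (k'+1)).succAbove (ib.succAbove p))
    have hl : (Fin.last (k'+1)).val = k'+1 := rfl
    omega
  have hcol0 : ∀ q : Fin k', (b.succAbove (ja.succAbove (j0.succAbove q))).val ≠ 0 := by
    intro q h
    have h2 : b.succAbove (ja.succAbove (j0.succAbove q)) = b.succAbove (ja.succAbove j0) :=
      Fin.ext (by rw [h, hj0v]; rfl)
    have h3 := Fin.succAbove_right_injective (p := b) h2
    have h4 := Fin.succAbove_right_injective (p := ja) h3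
    exact Fin.succAbove_ne j0 q h4
  have hcola : ∀ q : Fin k', (b.succAbove (ja.succAbove (j0.succAbove q))).val ≠ a.val := by
    intro q h
    have h2 : b.succAbove (ja.succAbove (j0.succAbove q)) = b.succAbove ja :=
      Fin.ext (by rw [h, hjav])
    have h3 := Fin.succAbove_right_injective (p := b) h2
    exact Fin.succAbove_ne ja _ h3
  have hcolb : ∀ q : Fin k', (b.succAbove (ja.succAbove (j0.succAbove q))).val ≠ b.val :=
    fun q h => Fin.succAbove_ne b _ (Fin.ext h)
  have hrownebp : ∀ p : Fin k',
      (r.succAbove ((Fin.last (k'+1)).succAbove (ib.succAbove p))).val ≠ b.val - 1 := by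
    intro p h
    have h2 : r.succAbove ((Fin.last (k'+1)).succAbove (ib.succAbove p)) =
        r.succAbove ((Fin.last (k'+1)).succAbove ib) := Fin.ext (by rw [h, hibrow])
    have h3 := Fin.succAbove_right_injective (p := r) h2
    have h4 := Fin.succAbove_right_injective (p := Fin.last (k'+1)) h3
    exact Fin.succAbove_ne ib p h4
  apply Gdet
  · intro q
    have hclt : (b.succAbove (ja.succAbove (j0.succAbove q))).val < k'+1+2 := Fin.isLt _
    have hcv0 := hcol0 q
    have hcva := hcola q
    have hcvb := hcolb q
    set cv := (b.succAbove (ja.succAbove (j0.succAbove q))).val with hcv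
    set y : Fin (k'+1+2) := ⟨cv - 1, by omega⟩ with hy
    have hyv : y.val = cv - 1 := rfl
    have hyner : y ≠ r := by
      intro h
      have h2 := congrArg Fin.val h
      rw [hrv, hyv] at h2
      omega
    obtain ⟨u1, hu1⟩ := Fin.exists_succAbove_eq hyner
    have hu1val : u1.val ≠ k'+1 := by
      intro h
      have e1 := sa_spec r u1
      have h2 := congrArg Fin.val hu1
      rw [hyv] at h2
      omega
    set u2 : Fin (k'+1) := ⟨u1.val, by omega⟩ with hu2
    have hcast2 : (Fin.last (k'+1)).succAbove u2 = u1 := by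
      apply Fin.ext
      have e1 := sa_spec (Fin.last (k'+1)) u2
      have hl : (Fin.last (k'+1)).val = k'+1 := rfl
      have hpv : u2.val = u1.val := rfl
      omega
    have hune : u2 ≠ ib := by
      intro h
      have h2 : (r.succAbove ((Fin.last (k'+1)).succAbove ib)).val = cv - 1 := by
        rw [← h, hcast2, hu1, hyv]
      rw [hibrow] at h2
      have := b.isLt
      omega
    obtain ⟨p, hp⟩ := Fin.exists_succAbove_eq (Ne.symm (Ne.symm hune))
    refine ⟨p, ?_⟩
    show A (r.succAbove ((Fin.last (k'+1)).succAbove (ib.succAbove p)))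
        (b.succAbove (ja.succAbove (j0.succAbove q))) ≠ 0
    rw [hp, hcast2, hu1]
    refine (entry_n hA hn _ _ (by rw [hyv]; omega) (Or.inr (by rw [hyv]; omega))).2
  · intro p q q' hq hq'
    have c1 := entry_nz hA _ _ (hrowne p) hq
    have c2 := entry_nz hA _ _ (hrowne p) hq'
    have h1 := hcol0 q
    have h2 := hcol0 q'
    have h3 : b.succAbove (ja.succAbove (j0.succAbove q)) =
        b.succAbove (ja.succAbove (j0.succAbove q')) := Fin.ext (by omega)
    exact Fin.succAbove_right_injective (Fin.succAbove_right_injective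
      (Fin.succAbove_right_injective h3))
  · intro p p' q hp hp'
    have c1 := entry_nz hA _ _ (hrowne p) hp
    have c2 := entry_nz hA _ _ (hrowne p') hp'
    have h1 := hcol0 q
    have h3 : r.succAbove ((Fin.last (k'+1)).succAbove (ib.succAbove p)) =
        r.succAbove ((Fin.last (k'+1)).succAbove (ib.succAbove p')) := Fin.ext (by omega)
    exact Fin.succAbove_right_injective (Fin.succAbove_right_injective
      (Fin.succAbove_right_injective h3))
  · intro p q hq
    exact (entry_n hA hn _ _ (hrowne p) (entry_nz hA _ _ (hrowne p) hq)).1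

set_option maxHeartbeats 1000000 in
lemma wordII {k : ℕ} {n m : Fin (k+2) → ℕ} {A : Matrix (Fin (k+2)) (Fin (k+2)) ℤ}
    (hA : HypA k n m A) (hn : ∀ i, 0 < n i) (a b : Fin (k+2))
    (ha0 : a.val ≠ 0) (hab : a ≠ b)
    (r : Fin (k+2)) (hrv : r.val = a.val - 1) :
    ((A.submatrix r.succAbove b.succAbove).det).natAbs
      = m a * ∏ l ∈ (Finset.univ.erase b).erase a, n l := by
  obtain ⟨ja, hja⟩ := Fin.exists_succAbove_eq hab
  rw [wordII_step1 hA a b ha0 r hrv ja hja]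
  by_cases hb0 : b.val = 0
  · rw [wordII_gdet0 hA hn a b ha0 hb0 r hrv ja hja]
    congr 1
    rw [← RI ja (fun x => n (b.succAbove x)), RI2 b ja n, hja]
  · have hk1 : 1 ≤ k := by
      have h1 := a.isLt
      have h2 := b.isLt
      have h3 : a.val ≠ b.val := fun h => hab (Fin.ext h)
      omega
    obtain ⟨k', rfl⟩ : ∃ k', k = k' + 1 := ⟨k - 1, by omega⟩
    have hjav : (b.succAbove ja).val = a.val := by rw [hja]
    -- construct ib
    set bpred : Fin (k'+1+2) := ⟨b.val - 1, by omega⟩ with hbp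
    have hbpv : bpred.val = b.val - 1 := rfl
    have hbpner : bpred ≠ r := by
      intro h
      have h2 := congrArg Fin.val h
      rw [hbpv, hrv] at h2
      exact hab (Fin.ext (by omega))
    obtain ⟨u, hu⟩ := Fin.exists_succAbove_eq hbpner
    have huv : u.val ≠ k'+1 := by
      intro h
      have e1 := sa_spec r u
      have h2 := congrArg Fin.val hu
      rw [hbpv] at h2
      have := b.isLt
      have := a.isLt
      omega
    set ib : Fin (k'+1) := ⟨u.val, by omega⟩ with hib
    have hcastib : (Fin.last (k'+1)).succAbove ib = u := by
      apply Fin.ext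
      have e1 := sa_spec (Fin.last (k'+1)) ib
      have hl : (Fin.last (k'+1)).val = k'+1 := rfl
      have hpv : ib.val = u.val := rfl
      omega
    have hibrow : (r.succAbove ((Fin.last (k'+1)).succAbove ib)).val = b.val - 1 := by
      rw [hcastib, hu, hbpv]
    -- construct j0
    have hja0 : ja ≠ 0 := by
      intro h
      apply ha0
      rw [← hjav, h, sa0 b hb0]
      rfl
    obtain ⟨j0, hj0⟩ := Fin.exists_succAbove_eq (Ne.symm hja0)
    have hj0v : b.succAbove (ja.succAbove j0) = (0 : Fin (k'+1+2)) := by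
      rw [hj0, sa0 b hb0]
    rw [wordII_step2 hA hn b hb0 r ja ib hibrow j0 hj0v,
      wordII_gdet hA hn a b ha0 hab hb0 r hrv ja hja ib hibrow j0 hj0v]
    have hprod : ∏ q : Fin k', n (b.succAbove (ja.succAbove (j0.succAbove q)))
        = ∏ l ∈ ((Finset.univ.erase b).erase a).erase (0 : Fin (k'+1+2)), n l := by
      rw [← RI j0 (fun x => n (b.succAbove (ja.succAbove x)))]
      rw [RIS ja _ (fun x => n (b.succAbove x))]
      rw [Finset.image_erase Fin.succAbove_right_injective, img_sa, hj0]
      rw [RIS b _ n]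
      congr 1
      rw [Finset.image_erase Fin.succAbove_right_injective,
        Finset.image_erase Fin.succAbove_right_injective, img_sa, hja, sa0 b hb0]
    have h0mem : (0 : Fin (k'+1+2)) ∈ (Finset.univ.erase b).erase a := by
      refine Finset.mem_erase.mpr ⟨?_, Finset.mem_erase.mpr ⟨?_, Finset.mem_univ _⟩⟩
      · intro h; exact ha0 (by rw [← h]; rfl)
      · intro h; exact hb0 (by rw [← h]; rfl)
    rw [hprod, ← Finset.mul_prod_erase _ n h0mem]

set_option maxHeartbeats 1000000 in
lemma wordI {k : ℕ} {n m : Fin (k+2) → ℕ} {A : Matrix (Fin (k+2)) (Fin (k+2)) ℤ}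
    (hA : HypA k n m A) (hn : ∀ i, 0 < n i) (b : Fin (k+2)) :
    ((A.submatrix (Fin.last (k+1)).succAbove b.succAbove).det).natAbs
      = ∏ l ∈ Finset.univ.erase b, n l := by
  by_cases hb0 : b.val = 0
  · have hdet : ((A.submatrix (Fin.last (k+1)).succAbove b.succAbove).det).natAbs
        = ∏ q : Fin (k+1), n (b.succAbove q) := by
      apply Gdet
      · intro q
        refine ⟨⟨q.val, q.isLt⟩, ?_⟩
        show A ((Fin.last (k+1)).succAbove ⟨q.val, q.isLt⟩) (b.succAbove q) ≠ 0
        have e1 := sa_spec (Fin.last (k+1)) (⟨q.val, q.isLt⟩ : Fin (k+1))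
        have e2 := sa_spec b q
        have hl : (Fin.last (k+1)).val = k+1 := rfl
        have hp : ((⟨q.val, q.isLt⟩ : Fin (k+1))).val = q.val := rfl
        refine (entry_n hA hn _ _ (by omega) (Or.inr (by omega))).2
      · intro p q q' hq hq'
        have hr : ((Fin.last (k+1)).succAbove p).val ≠ k+1 := by
          have e1 := sa_spec (Fin.last (k+1)) p
          have hl : (Fin.last (k+1)).val = k+1 := rfl
          omega
        have c1 := entry_nz hA _ _ hr hq
        have c2 := entry_nz hA _ _ hr hq'
        have e1 := sa_spec b q
        have e2 := sa_spec b q'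
        exact Fin.ext (by omega)
      · intro p p' q hp hp'
        have hr : ∀ x : Fin (k+1), ((Fin.last (k+1)).succAbove x).val ≠ k+1 := by
          intro x
          have e1 := sa_spec (Fin.last (k+1)) x
          have hl : (Fin.last (k+1)).val = k+1 := rfl
          omega
        have c1 := entry_nz hA _ _ (hr p) hp
        have c2 := entry_nz hA _ _ (hr p') hp'
        have e0 := sa_spec b q
        have e1 := sa_spec (Fin.last (k+1)) p
        have e2 := sa_spec (Fin.last (k+1)) p'
        have hl : (Fin.last (k+1)).val = k+1 := rfl
        exact Fin.ext (by omega)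
      · intro p q hq
        have hr : ((Fin.last (k+1)).succAbove p).val ≠ k+1 := by
          have e1 := sa_spec (Fin.last (k+1)) p
          have hl : (Fin.last (k+1)).val = k+1 := rfl
          omega
        exact (entry_n hA hn _ _ hr (entry_nz hA _ _ hr hq)).1
    rw [hdet, RI b n]
  · set M := A.submatrix (Fin.last (k+1)).succAbove b.succAbove with hM
    set ib : Fin (k+1) := ⟨b.val - 1, by omega⟩ with hib
    have hibv : ib.val = b.val - 1 := rfl
    have hrowib : ((Fin.last (k+1)).succAbove ib).val = b.val - 1 := by
      have e1 := sa_spec (Fin.last (k+1)) ib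
      have hl : (Fin.last (k+1)).val = k+1 := rfl
      omega
    have hstep : (M.det).natAbs = n 0 *
        ((M.submatrix ib.succAbove (0:Fin (k+1)).succAbove).det).natAbs := by
      have hz : ∀ q : Fin (k+1), q ≠ 0 → M ib q = 0 := by
        intro q hq
        show A ((Fin.last (k+1)).succAbove ib) (b.succAbove q) = 0
        have hcol0 : (b.succAbove q).val ≠ 0 := by
          intro h
          exact hq (Fin.succAbove_right_injective
            ((Fin.ext h : b.succAbove q = 0).trans (sa0 b hb0).symm))
        have hcolb : (b.succAbove q).val ≠ b.val :=
          fun h => Fin.succAbove_ne b q (Fin.ext h)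
        exact entry_0 hA _ _ (by omega) hcol0 (by omega)
      have hval : (M ib (0:Fin (k+1))).natAbs = n 0 := by
        show (A ((Fin.last (k+1)).succAbove ib) (b.succAbove (0:Fin (k+1)))).natAbs = n 0
        rw [sa0 b hb0]
        exact (entry_n hA hn _ _ (by omega) (Or.inl rfl)).1
      rw [P1row M ib (0:Fin (k+1)) hz, hval]
    have hrowne : ∀ p : Fin k, ((Fin.last (k+1)).succAbove (ib.succAbove p)).val ≠ k+1 := by
      intro p
      have e1 := sa_spec ib p
      have e2 := sa_spec (Fin.last (k+1)) (ib.succAbove p)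
      have hl : (Fin.last (k+1)).val = k+1 := rfl
      omega
    have hcol0 : ∀ q : Fin k, (b.succAbove ((0:Fin (k+1)).succAbove q)).val ≠ 0 := by
      intro q
      intro h
      have h2 : b.succAbove ((0:Fin (k+1)).succAbove q) = b.succAbove (0 : Fin (k+1)) :=
        (Fin.ext h).trans (sa0 b hb0).symm
      have h3 := Fin.succAbove_right_injective h2
      have e1 := sa_spec (0:Fin (k+1)) q
      have h4 : ((0:Fin (k+1)).val) = 0 := rfl
      have h5 := congrArg Fin.val h3
      omega
    have hcolb : ∀ q : Fin k, (b.succAbove ((0:Fin (k+1)).succAbove q)).val ≠ b.val :=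
      fun q h => Fin.succAbove_ne b _ (Fin.ext h)
    have hdet : ((M.submatrix ib.succAbove (0:Fin (k+1)).succAbove).det).natAbs
        = ∏ q : Fin k, n (b.succAbove ((0:Fin (k+1)).succAbove q)) := by
      apply Gdet
      · intro q
        have hclt : (b.succAbove ((0:Fin (k+1)).succAbove q)).val < k+2 := Fin.isLt _
        set cv := (b.succAbove ((0:Fin (k+1)).succAbove q)).val with hcv
        set u : Fin (k+1) := ⟨cv - 1, by omega⟩ with hu
        have huv : u.val = cv - 1 := rfl
        have hcv0 := hcol0 q
        have hune : u ≠ ib := by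
          intro h
          have h2 := congrArg Fin.val h
          rw [hibv] at h2
          have : cv = b.val := by omega
          exact hcolb q this
        obtain ⟨p, hp⟩ := Fin.exists_succAbove_eq (Ne.symm (Ne.symm hune))
        refine ⟨p, ?_⟩
        show A ((Fin.last (k+1)).succAbove (ib.succAbove p)) (b.succAbove ((0:Fin (k+1)).succAbove q)) ≠ 0
        have hrv : ((Fin.last (k+1)).succAbove (ib.succAbove p)).val = cv - 1 := by
          have e1 := sa_spec (Fin.last (k+1)) (ib.succAbove p)
          have hl : (Fin.last (k+1)).val = k+1 := rfl
          have h5 := congrArg Fin.val hp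
          have h6 : u.val = cv - 1 := rfl
          omega
        refine (entry_n hA hn _ _ ?_ (Or.inr ?_)).2
        · rw [hrv]; omega
        · rw [hrv]; have := hcol0 q; omega
      · intro p q q' hq hq'
        have c1 := entry_nz hA _ _ (hrowne p) hq
        have c2 := entry_nz hA _ _ (hrowne p) hq'
        have h1 := hcol0 q
        have h2 := hcol0 q'
        have : b.succAbove ((0:Fin (k+1)).succAbove q) = b.succAbove ((0:Fin (k+1)).succAbove q') :=
          Fin.ext (by omega)
        exact Fin.succAbove_right_injective (Fin.succAbove_right_injective this)
      · intro p p' q hp hp'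
        have c1 := entry_nz hA _ _ (hrowne p) hp
        have c2 := entry_nz hA _ _ (hrowne p') hp'
        have h1 := hcol0 q
        have : (Fin.last (k+1)).succAbove (ib.succAbove p) =
            (Fin.last (k+1)).succAbove (ib.succAbove p') := Fin.ext (by omega)
        exact Fin.succAbove_right_injective (Fin.succAbove_right_injective this)
      · intro p q hq
        exact (entry_n hA hn _ _ (hrowne p) (entry_nz hA _ _ (hrowne p) hq)).1
    have hprod : ∏ q : Fin k, n (b.succAbove ((0:Fin (k+1)).succAbove q))
        = ∏ l ∈ (Finset.univ.erase b).erase (0 : Fin (k+2)), n l := by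
      rw [← RI (0:Fin (k+1)) (fun x => n (b.succAbove x)), RI2 b (0:Fin (k+1)) n, sa0 b hb0]
    have h0mem : (0 : Fin (k+2)) ∈ Finset.univ.erase b := by
      refine Finset.mem_erase.mpr ⟨?_, Finset.mem_univ _⟩
      intro h
      exact hb0 (by rw [← h]; rfl)
    rw [hstep, hdet, hprod, ← Finset.mul_prod_erase _ n h0mem]

set_option maxHeartbeats 2000000 in
lemma wordIIIT2 {k : ℕ} {n m : Fin (k+2) → ℕ} {A : Matrix (Fin (k+2)) (Fin (k+2)) ℤ}
    (hA : HypA k n m A) (hn : ∀ i, 0 < n i) (b : Fin (k+2)) (hb0 : b.val ≠ 0) (j : Fin (k+1))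
    (bpred : Fin (k+2)) (hbpv : bpred.val = b.val - 1) :
    ((∏ q : Fin k, n (b.succAbove (j.succAbove q)) : ℕ) : ℤ) ∣
      (((A.submatrix bpred.succAbove b.succAbove).submatrix
        (Fin.last k).succAbove j.succAbove).det) := by
  apply T2
  intro p q
  by_cases hz : ((A.submatrix bpred.succAbove b.succAbove).submatrix
      (Fin.last k).succAbove j.succAbove) p q = 0
  · exact Or.inl hz
  · right
    have hz' : A (bpred.succAbove ((Fin.last k).succAbove p)) (b.succAbove (j.succAbove q)) ≠ 0 := hz
    have hrowne : (bpred.succAbove ((Fin.last k).succAbove p)).val ≠ k+1 := by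
      have e0 := sa_spec (Fin.last k) p
      have e1 := sa_spec bpred ((Fin.last k).succAbove p)
      have hl : (Fin.last k).val = k := rfl
      have := b.isLt
      omega
    exact (entry_n hA hn _ _ hrowne (entry_nz hA _ _ hrowne hz')).1

set_option maxHeartbeats 4000000 in
lemma wordIIIC0 {k : ℕ} {n m : Fin (k+2) → ℕ} {A : Matrix (Fin (k+2)) (Fin (k+2)) ℤ}
    (hA : HypA k n m A) (hn : ∀ i, 0 < n i) (b : Fin (k+2)) (hb0 : b.val ≠ 0)
    (bpred : Fin (k+2)) (hbpv : bpred.val = b.val - 1) :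
    (((A.submatrix bpred.succAbove b.succAbove).submatrix
        (Fin.last k).succAbove (0 : Fin (k+1)).succAbove).det).natAbs
      = ∏ l ∈ (Finset.univ.erase b).erase (0 : Fin (k+2)), n l := by
  have hblt := b.isLt
  have hrowne : ∀ p : Fin k, (bpred.succAbove ((Fin.last k).succAbove p)).val ≠ k+1 := by
    intro p
    have e0 := sa_spec (Fin.last k) p
    have e1 := sa_spec bpred ((Fin.last k).succAbove p)
    have hl : (Fin.last k).val = k := rfl
    omega
  have hcol0 : ∀ q : Fin k, (b.succAbove ((0:Fin (k+1)).succAbove q)).val ≠ 0 := by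
    intro q h
    have h2 : b.succAbove ((0:Fin (k+1)).succAbove q) = b.succAbove (0 : Fin (k+1)) :=
      (Fin.ext h).trans (sa0 b hb0).symm
    have h3 := Fin.succAbove_right_injective h2
    have e1 := sa_spec (0:Fin (k+1)) q
    have h4 : ((0:Fin (k+1)).val) = 0 := rfl
    have h5 := congrArg Fin.val h3
    omega
  have hcolb : ∀ q : Fin k, (b.succAbove ((0:Fin (k+1)).succAbove q)).val ≠ b.val :=
    fun q h => Fin.succAbove_ne b _ (Fin.ext h)
  have hdet : (((A.submatrix bpred.succAbove b.succAbove).submatrix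
        (Fin.last k).succAbove (0 : Fin (k+1)).succAbove).det).natAbs
      = ∏ q : Fin k, n (b.succAbove ((0:Fin (k+1)).succAbove q)) := by
    apply Gdet
    · intro q
      have hclt : (b.succAbove ((0:Fin (k+1)).succAbove q)).val < k+2 := Fin.isLt _
      set cv := (b.succAbove ((0:Fin (k+1)).succAbove q)).val with hcv
      have hcv0 := hcol0 q
      have hcvb := hcolb q
      set y : Fin (k+2) := ⟨cv - 1, by omega⟩ with hy
      have hyv : y.val = cv - 1 := rfl
      have hyne : y ≠ bpred := by
        intro h
        have h2 := congrArg Fin.val h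
        rw [hyv, hbpv] at h2
        omega
      obtain ⟨u, hu⟩ := Fin.exists_succAbove_eq hyne
      have huval : u.val ≠ k := by
        intro h
        have e1 := sa_spec bpred u
        have h2 := congrArg Fin.val hu
        rw [hyv] at h2
        omega
      set p : Fin k := ⟨u.val, by omega⟩ with hpd
      have hcast : (Fin.last k).succAbove p = u := by
        apply Fin.ext
        have e1 := sa_spec (Fin.last k) p
        have hl : (Fin.last k).val = k := rfl
        have hpv : p.val = u.val := rfl
        omega
      refine ⟨p, ?_⟩
      show A (bpred.succAbove ((Fin.last k).succAbove p)) (b.succAbove ((0:Fin (k+1)).succAbove q)) ≠ 0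
      rw [hcast, hu]
      refine (entry_n hA hn _ _ (by rw [hyv]; omega) (Or.inr (by rw [hyv]; omega))).2
    · intro p q q' hq hq'
      have c1 := entry_nz hA _ _ (hrowne p) hq
      have c2 := entry_nz hA _ _ (hrowne p) hq'
      have h1 := hcol0 q
      have h2 := hcol0 q'
      have h3 : b.succAbove ((0:Fin (k+1)).succAbove q) = b.succAbove ((0:Fin (k+1)).succAbove q') :=
        Fin.ext (by omega)
      exact Fin.succAbove_right_injective (Fin.succAbove_right_injective h3)
    · intro p p' q hp hp'
      have c1 := entry_nz hA _ _ (hrowne p) hp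
      have c2 := entry_nz hA _ _ (hrowne p') hp'
      have h1 := hcol0 q
      have h3 : bpred.succAbove ((Fin.last k).succAbove p) =
          bpred.succAbove ((Fin.last k).succAbove p') := Fin.ext (by omega)
      exact Fin.succAbove_right_injective (Fin.succAbove_right_injective h3)
    · intro p q hq
      exact (entry_n hA hn _ _ (hrowne p) (entry_nz hA _ _ (hrowne p) hq)).1
  rw [hdet, ← RI (0:Fin (k+1)) (fun x => n (b.succAbove x)), RI2 b (0:Fin (k+1)) n, sa0 b hb0]

set_option maxHeartbeats 2000000 in
/-- The gcd of all `(k−1)×(k−1)` minors of the relation matrix `A_k` of a Montesinos link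
equals `D₁`, the gcd of all products obtained from the words `n₁⋯n_{i-1}·m_i·n_{i+1}⋯n_k`
by deleting one factor. -/
theorem stmt7 (k : ℕ) (n m : Fin (k + 2) → ℕ)
    (hn : ∀ i, 0 < n i) (hm : ∀ i, 0 < m i)
    (A : Matrix (Fin (k + 2)) (Fin (k + 2)) ℤ)
    (hA : ∀ i j, A i j =
      if i.val = k + 1 then (m j : ℤ)
      else if j.val = 0 then (n 0 : ℤ)
      else if j.val = i.val + 1 then -(n j : ℤ)
      else 0) :
    Finset.univ.gcd (fun p : Fin (k + 2) × Fin (k + 2) =>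
        ((A.submatrix p.1.succAbove p.2.succAbove).det).natAbs)
      = Finset.univ.gcd (fun p : Fin (k + 2) × Fin (k + 2) =>
        ∏ j ∈ Finset.univ.erase p.2, (if j = p.1 then m j else n j)) := by
  classical
  set w : Fin (k+2) × Fin (k+2) → ℕ :=
    fun p => ∏ j ∈ Finset.univ.erase p.2, (if j = p.1 then m j else n j) with hw
  set f : Fin (k+2) × Fin (k+2) → ℕ :=
    fun p => ((A.submatrix p.1.succAbove p.2.succAbove).det).natAbs with hf
  set dL := Finset.univ.gcd f with hdL
  set dR := Finset.univ.gcd w with hdR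
  have hA' : HypA k n m A := hA
  have hAm := entry_m hA'
  have hAn := entry_n hA' hn
  have hAnz := entry_nz hA'
  have gcddvd : ∀ r c : Fin (k+2), dL ∣ ((A.submatrix r.succAbove c.succAbove).det).natAbs :=
    fun r c => Finset.gcd_dvd (Finset.mem_univ (r, c))
  have wdvd : ∀ a b : Fin (k+2), dR ∣ w (a, b) :=
    fun a b => Finset.gcd_dvd (Finset.mem_univ (a, b))
  have W1 : ∀ a b : Fin (k+2), a ≠ b →
      w (a, b) = m a * ∏ l ∈ (Finset.univ.erase b).erase a, n l := by
    intro a b hab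
    have ha : a ∈ Finset.univ.erase b := Finset.mem_erase.mpr ⟨hab, Finset.mem_univ a⟩
    show (∏ j ∈ Finset.univ.erase b, (if j = a then m j else n j)) = _
    rw [← Finset.mul_prod_erase _ _ ha, if_pos rfl]
    congr 1
    exact Finset.prod_congr rfl fun l hl => if_neg (Finset.mem_erase.mp hl).1
  have W2 : ∀ b : Fin (k+2), w (b, b) = ∏ l ∈ Finset.univ.erase b, n l := by
    intro b
    exact Finset.prod_congr rfl fun l hl => if_neg (Finset.mem_erase.mp hl).1
  -- direction 1 : dR ∣ dL
  have dir1 : dR ∣ dL := by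
    refine Finset.dvd_gcd fun p _ => ?_
    obtain ⟨r, c⟩ := p
    show dR ∣ ((A.submatrix r.succAbove c.succAbove).det).natAbs
    suffices h : (dR : ℤ) ∣ (A.submatrix r.succAbove c.succAbove).det by
      exact Int.natCast_dvd_natCast.mp (Int.dvd_natAbs.mpr h)
    rw [Matrix.det_apply]
    refine Finset.dvd_sum fun σ _ => ?_
    rw [Units.smul_def, zsmul_eq_mul]
    refine Dvd.dvd.mul_left ?_ _
    set a : Fin (k+2) :=
      if hex : (∃ i : Fin (k+1), (r.succAbove (σ i)).val = k+1)
      then c.succAbove hex.choose else c with ha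
    have key : ∀ i : Fin (k+1),
        (A.submatrix r.succAbove c.succAbove) (σ i) i = 0 ∨
        ((A.submatrix r.succAbove c.succAbove) (σ i) i).natAbs =
          (if c.succAbove i = a then m (c.succAbove i) else n (c.succAbove i)) := by
      intro i
      by_cases hz : (A.submatrix r.succAbove c.succAbove) (σ i) i = 0
      · exact Or.inl hz
      right
      have hz' : A (r.succAbove (σ i)) (c.succAbove i) ≠ 0 := hz
      by_cases hrow : (r.succAbove (σ i)).val = k+1
      · have hex' : ∃ i' : Fin (k+1), (r.succAbove (σ i')).val = k+1 := ⟨i, hrow⟩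
        have hch : (r.succAbove (σ hex'.choose)).val = k+1 := hex'.choose_spec
        have hchi : hex'.choose = i := by
          have h1 : r.succAbove (σ hex'.choose) = r.succAbove (σ i) :=
            Fin.ext (by rw [hch, hrow])
          exact σ.injective (Fin.succAbove_right_injective h1)
        have haa : a = c.succAbove i := by rw [ha, dif_pos hex', hchi]
        rw [← haa, if_pos rfl]
        show (A (r.succAbove (σ i)) (c.succAbove i)).natAbs = _
        rw [hAm _ _ hrow, haa]
        simp
      · have hcond := hAnz _ _ hrow hz'
        have hne : c.succAbove i ≠ a := by
          intro hia
          by_cases hex2 : ∃ i' : Fin (k+1), (r.succAbove (σ i')).val = k+1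
          · have ha2 : a = c.succAbove hex2.choose := by rw [ha, dif_pos hex2]
            have h3 : i = hex2.choose :=
              Fin.succAbove_right_injective (by rw [← ha2, hia])
            exact hrow (h3 ▸ hex2.choose_spec)
          · have h3 : a = c := by rw [ha, dif_neg hex2]
            exact Fin.succAbove_ne c i (hia.trans h3)
        rw [if_neg hne]
        exact (hAn _ _ hrow hcond).1
    have hdvd1 : ((∏ i : Fin (k+1),
        (if c.succAbove i = a then m (c.succAbove i) else n (c.succAbove i)) : ℕ) : ℤ) ∣
        ∏ i : Fin (k+1), (A.submatrix r.succAbove c.succAbove) (σ i) i :=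
      dvd_prod_of_pattern _ _ key
    have hwa : w (a, c) = ∏ i : Fin (k+1),
        (if c.succAbove i = a then m (c.succAbove i) else n (c.succAbove i)) := by
      show (∏ j ∈ Finset.univ.erase c, (if j = a then m j else n j)) = _
      exact RI c (fun j => if j = a then m j else n j)
    refine dvd_trans ?_ hdvd1
    exact_mod_cast Int.natCast_dvd_natCast.mpr (hwa ▸ wdvd a c)
  have dir2 : dL ∣ dR := by
    have hII : ∀ a b : Fin (k+2), a.val ≠ 0 → a ≠ b → dL ∣ w (a, b) := by
      intro a b ha0 hab
      have hg := gcddvd (⟨a.val - 1, by omega⟩ : Fin (k+2)) b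
      rw [wordII hA' hn a b ha0 hab (⟨a.val - 1, by omega⟩ : Fin (k+2)) rfl,
        ← W1 a b hab] at hg
      exact hg
    have hI : ∀ b : Fin (k+2), dL ∣ w (b, b) := by
      intro b
      have hg := gcddvd (Fin.last (k+1)) b
      rw [wordI hA' hn b, ← W2 b] at hg
      exact hg
    have hIII : ∀ b : Fin (k+2), b.val ≠ 0 → dL ∣ w (0, b) := by
      intro b hb0
      have hblt := b.isLt
      set bp : Fin (k+2) := ⟨b.val - 1, by omega⟩ with hbpd
      have hbpv : bp.val = b.val - 1 := rfl
      have hrowlast : (bp.succAbove (Fin.last k)).val = k+1 := by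
        have e := sa_spec bp (Fin.last k)
        have hl : (Fin.last k).val = k := rfl
        omega
      have hNlast : ∀ j : Fin (k+1),
          (A.submatrix bp.succAbove b.succAbove) (Fin.last k) j = (m (b.succAbove j) : ℤ) := by
        intro j
        show A (bp.succAbove (Fin.last k)) (b.succAbove j) = _
        exact hAm _ _ hrowlast
      set t : Fin (k+1) → ℤ := fun j =>
        (-1:ℤ)^((Fin.last k).val + j.val) *
          ((A.submatrix bp.succAbove b.succAbove) (Fin.last k) j) *
          (((A.submatrix bp.succAbove b.succAbove).submatrix
            (Fin.last k).succAbove j.succAbove).det) with htdef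
      have key : (A.submatrix bp.succAbove b.succAbove).det = ∑ j : Fin (k+1), t j := by
        rw [Matrix.det_succ_row (A.submatrix bp.succAbove b.succAbove) (Fin.last k)]
      have hdvdN : (dL : ℤ) ∣ (A.submatrix bp.succAbove b.succAbove).det :=
        Int.dvd_natAbs.mp (Int.natCast_dvd_natCast.mpr (gcddvd bp b))
      have hterm : ∀ j : Fin (k+1), j ≠ 0 → (dL:ℤ) ∣ t j := by
        intro j hj
        have haj0 : (b.succAbove j).val ≠ 0 := by
          intro h
          have h2 : b.succAbove j = (0 : Fin (k+2)) := Fin.ext (by rw [h]; rfl)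
          exact hj (Fin.succAbove_right_injective (h2.trans (sa0 b hb0).symm))
        have hajb : b.succAbove j ≠ b := Fin.succAbove_ne b j
        have hg := gcddvd (⟨(b.succAbove j).val - 1, by omega⟩ : Fin (k+2)) b
        rw [wordII hA' hn (b.succAbove j) b haj0 hajb _ rfl] at hg
        have hT2 := wordIIIT2 hA' hn b hb0 j bp hbpv
        have hprodj : ∏ q : Fin k, n (b.succAbove (j.succAbove q)) =
            ∏ l ∈ (Finset.univ.erase b).erase (b.succAbove j), n l := by
          rw [← RI j (fun x => n (b.succAbove x)), RI2 b j n]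
        rw [hprodj] at hT2
        have h2 : ((m (b.succAbove j) : ℤ) *
            ((∏ l ∈ (Finset.univ.erase b).erase (b.succAbove j), n l : ℕ) : ℤ)) ∣
            ((m (b.succAbove j) : ℤ) *
              ((A.submatrix bp.succAbove b.succAbove).submatrix
                (Fin.last k).succAbove j.succAbove).det) :=
          mul_dvd_mul_left _ hT2
        have h4 : (dL:ℤ) ∣ (m (b.succAbove j) : ℤ) *
            ((∏ l ∈ (Finset.univ.erase b).erase (b.succAbove j), n l : ℕ) : ℤ) := by
          exact_mod_cast Int.natCast_dvd_natCast.mpr hg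
        refine dvd_trans (dvd_trans h4 h2) ?_
        rw [htdef]
        simp only []
        rw [hNlast j]
        have hre : (-1:ℤ)^((Fin.last k).val + j.val) * (m (b.succAbove j):ℤ) *
            ((A.submatrix bp.succAbove b.succAbove).submatrix
              (Fin.last k).succAbove j.succAbove).det
            = (-1:ℤ)^((Fin.last k).val + j.val) * ((m (b.succAbove j):ℤ) *
              ((A.submatrix bp.succAbove b.succAbove).submatrix
                (Fin.last k).succAbove j.succAbove).det) := by ring
        rw [hre]
        exact Dvd.dvd.mul_left dvd_rfl _
      have ht0 : t 0 = (A.submatrix bp.succAbove b.succAbove).det -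
          ∑ j ∈ Finset.univ.erase (0:Fin (k+1)), t j := by
        rw [key, ← Finset.add_sum_erase _ t (Finset.mem_univ (0:Fin (k+1)))]
        ring
      have hdvdt0 : (dL:ℤ) ∣ t 0 := by
        rw [ht0]
        exact dvd_sub hdvdN (Finset.dvd_sum fun j hj => hterm j (Finset.mem_erase.mp hj).1)
      have hC0 := wordIIIC0 hA' hn b hb0 bp hbpv
      have habs : (t 0).natAbs = m 0 * ∏ l ∈ (Finset.univ.erase b).erase (0:Fin (k+2)), n l := by
        rw [htdef]
        simp only []
        rw [hNlast 0, sa0 b hb0, Int.natAbs_mul, Int.natAbs_mul, hC0]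
        simp [Int.natAbs_pow]
      have hfin : dL ∣ (t 0).natAbs := Int.natCast_dvd_natCast.mp (Int.dvd_natAbs.mpr hdvdt0)
      rw [habs] at hfin
      rw [W1 (0:Fin (k+2)) b (fun h => hb0 (by rw [← h]; rfl))]
      exact hfin
    refine Finset.dvd_gcd fun p _ => ?_
    obtain ⟨a, b⟩ := p
    by_cases hab : a = b
    · subst hab; exact hI a
    · by_cases ha : a.val = 0
      · have ha' : a = 0 := Fin.ext ha
        subst ha'
        have hb : b.val ≠ 0 := by
          intro h
          exact hab (Fin.ext (by rw [h]; rfl))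
        exact hIII b hb
      · exact hII a b ha hab
  exact Nat.dvd_antisymm dir2 dir1
end

section
/- Let n₁,…,n_k be positive integers and let D₁ = gcd{ Π_{j ∉ {i,l}} n_j : 1 ≤ i < l ≤ k } (gcd of all products of k−2 of the n's). Then the abelian group ℤ^k modulo the relations n₁z₁ = n₂z₂ = ⋯ = n_k z_k and z₁ + z₂ + ⋯ + z_k = 0 is cyclic if and only if D₁ = 1. -/
open Function Finset

/-- `ZMod p × ZMod p` is not generated by one element. -/
lemma pretzel_not_gen (p : ℕ) (hp : p.Prime)
    (h : ∃ g : ZMod p × ZMod p, ∀ x : ZMod p × ZMod p, ∃ z : ℤ, z • g = x) : False := by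
  haveI : Fact p.Prime := ⟨hp⟩
  obtain ⟨⟨g1, g2⟩, hg⟩ := h
  obtain ⟨z1, h1⟩ := hg (1, 0)
  obtain ⟨z2, h2⟩ := hg (0, 1)
  rw [Prod.smul_mk, Prod.mk.injEq] at h1 h2
  obtain ⟨h11, h12⟩ := h1
  obtain ⟨h21, h22⟩ := h2
  rw [zsmul_eq_mul] at h11 h12 h21 h22
  have hz1 : (z1 : ZMod p) ≠ 0 := fun h => by simp [h] at h11
  have hg2 : g2 = 0 := (mul_eq_zero.mp h12).resolve_left hz1
  rw [hg2, mul_zero] at h22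
  exact one_ne_zero h22.symm

lemma pretzel_no_surj {M : Type*} [AddCommGroup M]
    (h : ∀ p : ℕ, p.Prime → ∃ g : M, ∀ x : M, ∃ (z : ℤ) (y : M), x = z • g + (p : ℤ) • y)
    (p : ℕ) (hp : p.Prime) (ψ : M →+ ZMod p × ZMod p) (hs : Surjective ψ) : False := by
  obtain ⟨g, hg⟩ := h p hp
  refine pretzel_not_gen p hp ⟨ψ g, fun v => ?_⟩
  obtain ⟨x, rfl⟩ := hs v
  obtain ⟨z, y, hx⟩ := hg x
  refine ⟨z, ?_⟩
  have hzero : (p : ℤ) • ψ y = 0 := by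
    ext
    · show (p : ℤ) • (ψ y).1 = 0
      rw [zsmul_eq_mul]; push_cast [ZMod.natCast_self]; ring
    · show (p : ℤ) • (ψ y).2 = 0
      rw [zsmul_eq_mul]; push_cast [ZMod.natCast_self]; ring
  rw [hx, map_add, map_zsmul, map_zsmul, hzero, add_zero]

lemma pretzel_cyclic_of_local {M : Type*} [AddCommGroup M] [AddGroup.FG M]
    (h : ∀ p : ℕ, p.Prime → ∃ g : M, ∀ x : M, ∃ (z : ℤ) (y : M), x = z • g + (p : ℤ) • y) :
    IsAddCyclic M := by
  classical
  obtain ⟨n, ι, fι, p, hp, e, ⟨f⟩⟩ := AddCommGroup.equiv_free_prod_directSum_zmod M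
  set q : ι → ℕ := fun i => p i ^ e i with hq
  -- first: no two indices with nontrivial torsion share a prime
  have hdistinct : ∀ i j : ι, i ≠ j → e i ≠ 0 → e j ≠ 0 → p i ≠ p j := by
    intro i j hij hei hej hpij
    have hdvdi : p i ∣ q i := dvd_pow_self (p i) hei
    have hdvdj : p i ∣ q j := hpij ▸ dvd_pow_self (p j) hej
    set A : M →+ ZMod (p i) :=
      ((ZMod.castHom hdvdi (ZMod (p i))).toAddMonoidHom.comp
        ((Pi.evalAddMonoidHom (fun i => ZMod (q i)) i).comp
          ((DirectSum.addEquivProd (fun i => ZMod (q i))).toAddMonoidHom.comp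
            (AddMonoidHom.snd (Fin n →₀ ℤ) _)))).comp f.toAddMonoidHom with hA
    set B : M →+ ZMod (p i) :=
      ((ZMod.castHom hdvdj (ZMod (p i))).toAddMonoidHom.comp
        ((Pi.evalAddMonoidHom (fun i => ZMod (q i)) j).comp
          ((DirectSum.addEquivProd (fun i => ZMod (q i))).toAddMonoidHom.comp
            (AddMonoidHom.snd (Fin n →₀ ℤ) _)))).comp f.toAddMonoidHom with hB
    refine pretzel_no_surj h (p i) (hp i) (A.prod B) ?_
    rintro ⟨u, v⟩
    obtain ⟨zu, rfl⟩ := ZMod.intCast_surjective u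
    obtain ⟨zv, rfl⟩ := ZMod.intCast_surjective v
    refine ⟨f.symm (0, DirectSum.of (fun i => ZMod (q i)) i (zu : ZMod (q i))
        + DirectSum.of (fun i => ZMod (q i)) j (zv : ZMod (q j))), ?_⟩
    have happ := f.apply_symm_apply (0, DirectSum.of (fun i => ZMod (q i)) i (zu : ZMod (q i))
        + DirectSum.of (fun i => ZMod (q i)) j (zv : ZMod (q j)))
    have keyA : ((DirectSum.addEquivProd (fun i => ZMod (q i)))
        (DirectSum.of (fun i => ZMod (q i)) i (zu : ZMod (q i))
          + DirectSum.of (fun i => ZMod (q i)) j (zv : ZMod (q j)))) i = (zu : ZMod (q i)) := by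
      have h1 : ((DirectSum.addEquivProd (fun i => ZMod (q i)))
          (DirectSum.of (fun i => ZMod (q i)) i (zu : ZMod (q i))
            + DirectSum.of (fun i => ZMod (q i)) j (zv : ZMod (q j)))) i
          = (DirectSum.of (fun i => ZMod (q i)) i (zu : ZMod (q i))
            + DirectSum.of (fun i => ZMod (q i)) j (zv : ZMod (q j))) i := rfl
      rw [h1, DirectSum.add_apply, DirectSum.of_eq_same,
        DirectSum.of_eq_of_ne _ _ _ hij, add_zero]
    have keyB : ((DirectSum.addEquivProd (fun i => ZMod (q i)))
        (DirectSum.of (fun i => ZMod (q i)) i (zu : ZMod (q i))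
          + DirectSum.of (fun i => ZMod (q i)) j (zv : ZMod (q j)))) j = (zv : ZMod (q j)) := by
      have h1 : ((DirectSum.addEquivProd (fun i => ZMod (q i)))
          (DirectSum.of (fun i => ZMod (q i)) i (zu : ZMod (q i))
            + DirectSum.of (fun i => ZMod (q i)) j (zv : ZMod (q j)))) j
          = (DirectSum.of (fun i => ZMod (q i)) i (zu : ZMod (q i))
            + DirectSum.of (fun i => ZMod (q i)) j (zv : ZMod (q j))) j := rfl
      rw [h1, DirectSum.add_apply, DirectSum.of_eq_same,
        DirectSum.of_eq_of_ne _ _ _ (Ne.symm hij), zero_add]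
    ext
    · show A _ = _
      rw [hA]
      simp only [AddMonoidHom.comp_apply, AddEquiv.coe_toAddMonoidHom, happ,
        AddMonoidHom.coe_snd, Pi.evalAddMonoidHom_apply, RingHom.toAddMonoidHom_eq_coe]
      rw [keyA]
      exact map_intCast (ZMod.castHom hdvdi (ZMod (p i))) zu
    · show B _ = _
      rw [hB]
      simp only [AddMonoidHom.comp_apply, AddEquiv.coe_toAddMonoidHom, happ,
        AddMonoidHom.coe_snd, Pi.evalAddMonoidHom_apply, RingHom.toAddMonoidHom_eq_coe]
      rw [keyB]
      exact map_intCast (ZMod.castHom hdvdj (ZMod (p i))) zv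
  have hn1 : n ≤ 1 := by
    by_contra hn
    push_neg at hn
    set i0 : Fin n := ⟨0, by omega⟩ with hi0
    set i1 : Fin n := ⟨1, by omega⟩ with hi1
    have h01 : i0 ≠ i1 := by
      intro hcon
      have := congrArg Fin.val hcon
      simp [hi0, hi1] at this
    set A : M →+ ZMod 2 := ((Int.castAddHom (ZMod 2)).comp
      ((Finsupp.applyAddHom i0).comp
        (AddMonoidHom.fst (Fin n →₀ ℤ) (DirectSum ι fun i => ZMod (q i))))).comp
      f.toAddMonoidHom with hA
    set B : M →+ ZMod 2 := ((Int.castAddHom (ZMod 2)).comp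
      ((Finsupp.applyAddHom i1).comp
        (AddMonoidHom.fst (Fin n →₀ ℤ) (DirectSum ι fun i => ZMod (q i))))).comp
      f.toAddMonoidHom with hB
    refine pretzel_no_surj h 2 Nat.prime_two (A.prod B) ?_
    rintro ⟨u, v⟩
    obtain ⟨zu, rfl⟩ := ZMod.intCast_surjective u
    obtain ⟨zv, rfl⟩ := ZMod.intCast_surjective v
    refine ⟨f.symm (Finsupp.single i0 zu + Finsupp.single i1 zv, 0), ?_⟩
    have happ := f.apply_symm_apply (Finsupp.single i0 zu + Finsupp.single i1 zv, 0)
    ext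
    · show A _ = _
      rw [hA]
      simp only [AddMonoidHom.comp_apply, AddEquiv.coe_toAddMonoidHom, happ,
        AddMonoidHom.coe_fst, Finsupp.applyAddHom_apply, Int.coe_castAddHom]
      rw [Finsupp.add_apply, Finsupp.single_eq_same, Finsupp.single_eq_of_ne' (Ne.symm h01),
        add_zero]
    · show B _ = _
      rw [hB]
      simp only [AddMonoidHom.comp_apply, AddEquiv.coe_toAddMonoidHom, happ,
        AddMonoidHom.coe_fst, Finsupp.applyAddHom_apply, Int.coe_castAddHom]
      rw [Finsupp.add_apply, Finsupp.single_eq_same, Finsupp.single_eq_of_ne' h01, zero_add]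
  have hmix : ¬ (n = 1 ∧ ∃ i, e i ≠ 0) := by
    rintro ⟨rfl, i, hei⟩
    have hdvdi : p i ∣ q i := dvd_pow_self (p i) hei
    set A : M →+ ZMod (p i) := ((Int.castAddHom (ZMod (p i))).comp
      ((Finsupp.applyAddHom (0 : Fin 1)).comp
        (AddMonoidHom.fst (Fin 1 →₀ ℤ) (DirectSum ι fun i => ZMod (q i))))).comp
      f.toAddMonoidHom with hA
    set B : M →+ ZMod (p i) :=
      ((ZMod.castHom hdvdi (ZMod (p i))).toAddMonoidHom.comp
        ((Pi.evalAddMonoidHom (fun i => ZMod (q i)) i).comp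
          ((DirectSum.addEquivProd (fun i => ZMod (q i))).toAddMonoidHom.comp
            (AddMonoidHom.snd (Fin 1 →₀ ℤ) _)))).comp f.toAddMonoidHom with hB
    refine pretzel_no_surj h (p i) (hp i) (A.prod B) ?_
    rintro ⟨u, v⟩
    obtain ⟨zu, rfl⟩ := ZMod.intCast_surjective u
    obtain ⟨zv, rfl⟩ := ZMod.intCast_surjective v
    refine ⟨f.symm (Finsupp.single 0 zu,
      DirectSum.of (fun i => ZMod (q i)) i (zv : ZMod (q i))), ?_⟩
    have happ := f.apply_symm_apply (Finsupp.single 0 zu,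
      DirectSum.of (fun i => ZMod (q i)) i (zv : ZMod (q i)))
    have keyB : ((DirectSum.addEquivProd (fun i => ZMod (q i)))
        (DirectSum.of (fun i => ZMod (q i)) i (zv : ZMod (q i)))) i = (zv : ZMod (q i)) := by
      have h1 : ((DirectSum.addEquivProd (fun i => ZMod (q i)))
          (DirectSum.of (fun i => ZMod (q i)) i (zv : ZMod (q i)))) i
          = (DirectSum.of (fun i => ZMod (q i)) i (zv : ZMod (q i))) i := rfl
      rw [h1, DirectSum.of_eq_same]
    ext
    · show A _ = _
      rw [hA]
      simp only [AddMonoidHom.comp_apply, AddEquiv.coe_toAddMonoidHom, happ,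
        AddMonoidHom.coe_fst, Finsupp.applyAddHom_apply, Int.coe_castAddHom]
      rw [Finsupp.single_eq_same]
    · show B _ = _
      rw [hB]
      simp only [AddMonoidHom.comp_apply, AddEquiv.coe_toAddMonoidHom, happ,
        AddMonoidHom.coe_snd, Pi.evalAddMonoidHom_apply, RingHom.toAddMonoidHom_eq_coe]
      rw [keyB]
      exact map_intCast (ZMod.castHom hdvdi (ZMod (p i))) zv
  -- now the positive cases
  interval_cases n
  · -- n = 0 : torsion, CRT
    have hcop : Pairwise (Nat.Coprime on q) := by
      intro i j hij
      by_cases hei : e i = 0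
      · show Nat.Coprime (q i) (q j)
        rw [hq]; simp only [hei, pow_zero]
        exact Nat.coprime_one_left _
      by_cases hej : e j = 0
      · show Nat.Coprime (q i) (q j)
        rw [hq]; simp only [hej, pow_zero]
        exact Nat.coprime_one_right _
      · show Nat.Coprime (q i) (q j)
        exact Nat.Coprime.pow _ _
          ((Nat.coprime_primes (hp i) (hp j)).mpr (hdistinct i j hij hei hej))
    have big : ZMod (∏ i, q i) ≃+ DirectSum ι (fun i => ZMod (q i)) :=
      (ZMod.prodEquivPi q hcop).toAddEquiv.trans (DirectSum.addEquivProd _).symm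
    set φ : ZMod (∏ i, q i) →+ M := f.symm.toAddMonoidHom.comp
      ((0 : ZMod (∏ i, q i) →+ (Fin 0 →₀ ℤ)).prod big.toAddMonoidHom) with hφ
    have hsurj : Surjective φ := by
      intro m
      refine ⟨big.symm (f m).2, ?_⟩
      rw [hφ]
      simp only [AddMonoidHom.comp_apply, AddMonoidHom.prod_apply, AddMonoidHom.zero_apply,
        AddEquiv.coe_toAddMonoidHom, AddEquiv.apply_symm_apply]
      have h1 : ((0 : Fin 0 →₀ ℤ), (f m).2) = f m := by
        refine Prod.ext (Finsupp.ext fun a => a.elim0) rfl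
      rw [h1]
      exact f.symm_apply_apply m
    exact isAddCyclic_of_surjective φ hsurj
  · -- n = 1 : free part ℤ, no torsion
    have hall : ∀ i, e i = 0 := by
      by_contra hcon
      push_neg at hcon
      exact hmix ⟨rfl, hcon⟩
    have hsub : ∀ i, Subsingleton (ZMod (q i)) := by
      intro i
      rw [hq]
      simp only [hall i, pow_zero]
      infer_instance
    haveI : Subsingleton (DirectSum ι fun i => ZMod (q i)) :=
      (DirectSum.addEquivProd (fun i => ZMod (q i))).toEquiv.subsingleton
    set φ : ℤ →+ M := f.symm.toAddMonoidHom.comp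
      ((Finsupp.singleAddHom (0 : Fin 1)).prod 0) with hφ
    have hsurj : Surjective φ := by
      intro m
      refine ⟨(f m).1 0, ?_⟩
      rw [hφ]
      simp only [AddMonoidHom.comp_apply, AddMonoidHom.prod_apply, AddMonoidHom.zero_apply,
        AddEquiv.coe_toAddMonoidHom, Finsupp.singleAddHom_apply]
      have h1 : (Finsupp.single (0 : Fin 1) ((f m).1 0), (0 : DirectSum ι fun i => ZMod (q i)))
          = f m := by
        refine Prod.ext (Finsupp.ext fun a => ?_) (Subsingleton.elim _ _)
        have ha : a = 0 := Subsingleton.elim _ _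
        rw [ha, Finsupp.single_eq_same]
      rw [h1]
      exact f.symm_apply_apply m
    exact isAddCyclic_of_surjective φ hsurj

lemma pretzel_three (k : ℕ) (n : Fin (k + 2) → ℕ) (hn : ∀ i, 0 < n i)
    (hD : Finset.gcd (Finset.univ.filter fun p : Fin (k + 2) × Fin (k + 2) => p.1 < p.2)
        (fun p => ∏ j ∈ (Finset.univ.erase p.1).erase p.2, n j) ≠ 1) :
    ∃ q : ℕ, q.Prime ∧ ∃ a b c : Fin (k + 2), a ≠ b ∧ a ≠ c ∧ b ≠ c ∧
      q ∣ n a ∧ q ∣ n b ∧ q ∣ n c := by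
  obtain ⟨q, hq, hqd⟩ := Nat.exists_prime_and_dvd hD
  have key : ∀ i l : Fin (k + 2), i ≠ l → ∃ j, j ≠ i ∧ j ≠ l ∧ q ∣ n j := by
    intro i l hil
    have main : ∀ i l : Fin (k + 2), i < l → ∃ j, j ≠ i ∧ j ≠ l ∧ q ∣ n j := by
      intro i l hlt
      have hmem : (i, l) ∈ (Finset.univ.filter
          fun p : Fin (k + 2) × Fin (k + 2) => p.1 < p.2) :=
        Finset.mem_filter.mpr ⟨Finset.mem_univ _, hlt⟩
      have hdvd : q ∣ ∏ j ∈ (Finset.univ.erase i).erase l, n j :=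
        hqd.trans (Finset.gcd_dvd hmem)
      obtain ⟨j, hj, hjd⟩ := (Nat.Prime.prime hq).exists_mem_finset_dvd hdvd
      have h1 := Finset.mem_erase.mp hj
      have h2 := Finset.mem_erase.mp h1.2
      exact ⟨j, h2.1, h1.1, hjd⟩
    rcases lt_or_gt_of_ne hil with hlt | hlt
    · exact main i l hlt
    · obtain ⟨j, hj1, hj2, hj3⟩ := main l i hlt
      exact ⟨j, hj2, hj1, hj3⟩
  have h01 : (0 : Fin (k + 2)) ≠ 1 := by
    intro hcon
    have := congrArg Fin.val hcon
    simp [Fin.val_zero, Fin.val_one] at this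
  obtain ⟨a, ha0, ha1, hqa⟩ := key 0 1 h01
  obtain ⟨b, hba, hb0, hqb⟩ := key a 0 ha0
  obtain ⟨c, hca, hcb, hqc⟩ := key a b (Ne.symm hba)
  exact ⟨q, hq, a, b, c, Ne.symm hba, Ne.symm hca, Ne.symm hcb, hqa, hqb, hqc⟩

lemma pretzel_mp (k : ℕ) (n : Fin (k + 2) → ℕ) (hn : ∀ i, 0 < n i)
    (hcyc : IsAddCyclic ((Fin (k + 2) → ℤ) ⧸ Submodule.span ℤ
      ((Set.range fun i : Fin (k + 2) =>
          (n 0 : ℤ) • Pi.single (0 : Fin (k + 2)) (1 : ℤ)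
            - (n i : ℤ) • Pi.single i (1 : ℤ))
        ∪ {fun _ => (1 : ℤ)}))) :
    Finset.gcd (Finset.univ.filter fun p : Fin (k + 2) × Fin (k + 2) => p.1 < p.2)
        (fun p => ∏ j ∈ (Finset.univ.erase p.1).erase p.2, n j) = 1 := by
  by_contra hD
  obtain ⟨q, hq, a, b, c, hab, hac, hbc, hqa, hqb, hqc⟩ := pretzel_three k n hn hD
  set R := Submodule.span ℤ
      ((Set.range fun i : Fin (k + 2) =>
          (n 0 : ℤ) • Pi.single (0 : Fin (k + 2)) (1 : ℤ)
            - (n i : ℤ) • Pi.single i (1 : ℤ))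
        ∪ {fun _ => (1 : ℤ)}) with hR
  set φ : (Fin (k + 2) → ℤ) →ₗ[ℤ] ZMod q × ZMod q :=
    { toFun := fun x => (((x a - x c : ℤ) : ZMod q), ((x b - x c : ℤ) : ZMod q))
      map_add' := by
        intro x y
        refine Prod.ext ?_ ?_ <;> · simp only [Pi.add_apply, Prod.fst_add, Prod.snd_add]
                                    push_cast
                                    ring
      map_smul' := by
        intro z x
        refine Prod.ext ?_ ?_ <;>
          · simp only [Pi.smul_apply, smul_eq_mul, RingHom.id_apply, Prod.smul_fst,
              Prod.smul_snd]
            rw [zsmul_eq_mul]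
            push_cast
            ring } with hφ
  have hsingle : ∀ j : Fin (k + 2), (n j : ℤ) • φ (Pi.single j 1) = 0 := by
    intro j
    by_cases hj : j = a ∨ j = b ∨ j = c
    · have hz : ((n j : ℕ) : ZMod q) = 0 := by
        rw [ZMod.natCast_eq_zero_iff]
        rcases hj with rfl | rfl | rfl <;> assumption
      have : ∀ u : ZMod q × ZMod q, (n j : ℤ) • u = 0 := by
        intro u
        refine Prod.ext ?_ ?_ <;>
          · simp only [Prod.smul_fst, Prod.smul_snd, Prod.fst_zero, Prod.snd_zero]
            rw [zsmul_eq_mul]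
            push_cast [hz]
            ring
      exact this _
    · push_neg at hj
      obtain ⟨hja, hjb, hjc⟩ := hj
      have hval : φ (Pi.single j 1) = 0 := by
        rw [hφ]
        simp only [LinearMap.coe_mk, AddHom.coe_mk]
        rw [Pi.single_eq_of_ne (Ne.symm hja), Pi.single_eq_of_ne (Ne.symm hjb),
          Pi.single_eq_of_ne (Ne.symm hjc)]
        simp
      rw [hval, smul_zero]
  have hker : R ≤ LinearMap.ker φ := by
    rw [hR, Submodule.span_le]
    intro x hx
    simp only [SetLike.mem_coe, LinearMap.mem_ker]
    rcases hx with hx | hx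
    · obtain ⟨i, rfl⟩ := hx
      rw [map_sub, map_smul, map_smul]
      change (n 0 : ℤ) • φ (Pi.single 0 1) - (n i : ℤ) • φ (Pi.single i 1) = 0
      rw [hsingle 0, hsingle i, sub_zero]
    · rw [Set.mem_singleton_iff] at hx
      subst hx
      rw [hφ]
      simp
  set ψ := Submodule.liftQ R φ hker with hψ
  have hsurj : Surjective ψ := by
    rintro ⟨u, v⟩
    obtain ⟨zu, rfl⟩ := ZMod.intCast_surjective u
    obtain ⟨zv, rfl⟩ := ZMod.intCast_surjective v
    refine ⟨Submodule.Quotient.mk (zu • Pi.single a 1 + zv • Pi.single b 1), ?_⟩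
    rw [hψ, Submodule.liftQ_apply, hφ]
    simp only [LinearMap.coe_mk, AddHom.coe_mk, Pi.add_apply, Pi.smul_apply, smul_eq_mul]
    rw [Pi.single_eq_same, Pi.single_eq_of_ne hab, Pi.single_eq_of_ne (Ne.symm hab),
      Pi.single_eq_same, Pi.single_eq_of_ne (Ne.symm hac), Pi.single_eq_of_ne (Ne.symm hbc)]
    refine Prod.ext ?_ ?_ <;> · push_cast; ring
  haveI := hcyc
  have : IsAddCyclic (ZMod q × ZMod q) := isAddCyclic_of_surjective ψ hsurj
  obtain ⟨g, hg⟩ := this.exists_zsmul_surjective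
  exact pretzel_not_gen q hq ⟨g, fun x => hg x⟩

lemma pretzel_atmost2 (k : ℕ) (n : Fin (k + 2) → ℕ)
    (hD : Finset.gcd (Finset.univ.filter fun p : Fin (k + 2) × Fin (k + 2) => p.1 < p.2)
        (fun p => ∏ j ∈ (Finset.univ.erase p.1).erase p.2, n j) = 1)
    (q : ℕ) (hq : q.Prime) :
    ∀ a b c : Fin (k + 2), q ∣ n a → q ∣ n b → q ∣ n c → a = b ∨ a = c ∨ b = c := by
    intro a b c ha hb hc
    by_contra hcon
    push_neg at hcon
    obtain ⟨hab, hac, hbc⟩ := hcon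
    have key : ∀ i l : Fin (k + 2), ∃ j, j ≠ i ∧ j ≠ l ∧ q ∣ n j := by
      intro i l
      by_cases h1 : a ≠ i ∧ a ≠ l
      · exact ⟨a, h1.1, h1.2, ha⟩
      by_cases h2 : b ≠ i ∧ b ≠ l
      · exact ⟨b, h2.1, h2.2, hb⟩
      by_cases h3 : c ≠ i ∧ c ≠ l
      · exact ⟨c, h3.1, h3.2, hc⟩
      exfalso
      push_neg at h1 h2 h3
      have ha' : a = i ∨ a = l := by tauto
      have hb' : b = i ∨ b = l := by tauto
      have hc' : c = i ∨ c = l := by tauto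
      rcases ha' with rfl | rfl
      · rcases hb' with hb1 | hb1
        · exact hab hb1.symm
        · rcases hc' with hc1 | hc1
          · exact hac hc1.symm
          · exact hbc (hb1.trans hc1.symm)
      · rcases hb' with hb1 | hb1
        · rcases hc' with hc1 | hc1
          · exact hbc (hb1.trans hc1.symm)
          · exact hac hc1.symm
        · exact hab hb1.symm
    have hdvd : q ∣ Finset.gcd (Finset.univ.filter
        fun p : Fin (k + 2) × Fin (k + 2) => p.1 < p.2)
        (fun p => ∏ j ∈ (Finset.univ.erase p.1).erase p.2, n j) := by
      refine Finset.dvd_gcd fun pr _ => ?_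
      obtain ⟨j, hj1, hj2, hj3⟩ := key pr.1 pr.2
      exact hj3.trans (Finset.dvd_prod_of_mem _
        (Finset.mem_erase.mpr ⟨hj2, Finset.mem_erase.mpr ⟨hj1, Finset.mem_univ j⟩⟩))
    rw [hD] at hdvd
    exact hq.one_lt.ne' (Nat.dvd_one.mp hdvd)

lemma pretzel_mpr (k : ℕ) (n : Fin (k + 2) → ℕ) (hn : ∀ i, 0 < n i)
    (hD : Finset.gcd (Finset.univ.filter fun p : Fin (k + 2) × Fin (k + 2) => p.1 < p.2)
        (fun p => ∏ j ∈ (Finset.univ.erase p.1).erase p.2, n j) = 1) :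
    IsAddCyclic ((Fin (k + 2) → ℤ) ⧸ Submodule.span ℤ
      ((Set.range fun i : Fin (k + 2) =>
          (n 0 : ℤ) • Pi.single (0 : Fin (k + 2)) (1 : ℤ)
            - (n i : ℤ) • Pi.single i (1 : ℤ))
        ∪ {fun _ => (1 : ℤ)})) := by
  set R := Submodule.span ℤ
      ((Set.range fun i : Fin (k + 2) =>
          (n 0 : ℤ) • Pi.single (0 : Fin (k + 2)) (1 : ℤ)
            - (n i : ℤ) • Pi.single i (1 : ℤ))
        ∪ {fun _ => (1 : ℤ)}) with hR
  haveI : AddGroup.FG ((Fin (k + 2) → ℤ) ⧸ R) := Module.Finite.iff_addGroup_fg.mp inferInstance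
  apply pretzel_cyclic_of_local
  intro q hq
  have hA := pretzel_atmost2 k n hD q hq
  set s : Fin (k + 2) → ((Fin (k + 2) → ℤ) ⧸ R) := fun i => R.mkQ (Pi.single i 1) with hs
  have hrel : ∀ i, (n 0 : ℤ) • s 0 = (n i : ℤ) • s i := by
    intro i
    have hin : ((n 0 : ℤ) • Pi.single (0 : Fin (k + 2)) (1 : ℤ)
        - (n i : ℤ) • Pi.single i (1 : ℤ)) ∈ R := by
      rw [hR]
      exact Submodule.subset_span (Or.inl ⟨i, rfl⟩)
    have h0 : R.mkQ ((n 0 : ℤ) • Pi.single (0 : Fin (k + 2)) (1 : ℤ)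
        - (n i : ℤ) • Pi.single i (1 : ℤ)) = 0 := by
      rw [Submodule.mkQ_apply, Submodule.Quotient.mk_eq_zero]
      exact hin
    rw [map_sub, map_smul, map_smul] at h0
    exact sub_eq_zero.mp h0
  have hsum : ∑ i, s i = 0 := by
    have hin : (fun _ : Fin (k + 2) => (1 : ℤ)) ∈ R := by
      rw [hR]
      exact Submodule.subset_span (Or.inr rfl)
    have h0 : R.mkQ (fun _ => (1 : ℤ)) = 0 := by
      rw [Submodule.mkQ_apply, Submodule.Quotient.mk_eq_zero]
      exact hin
    have hones : ∑ i, Pi.single i (1 : ℤ) = (fun _ : Fin (k + 2) => (1 : ℤ)) :=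
      Finset.univ_sum_single (fun _ => (1 : ℤ))
    calc ∑ i, s i = R.mkQ (∑ i, Pi.single i (1 : ℤ)) := by rw [map_sum]
    _ = 0 := by rw [hones, h0]
  set qT : Submodule ℤ ((Fin (k + 2) → ℤ) ⧸ R) :=
    LinearMap.range ((q : ℤ) • (LinearMap.id : ((Fin (k + 2) → ℤ) ⧸ R) →ₗ[ℤ] _)) with hqT
  have hqTmem : ∀ x, (q : ℤ) • x ∈ qT := by
    intro x
    exact ⟨x, by simp⟩
  -- main construction of a local generator
  have main : ∃ g, ∀ i, s i ∈ Submodule.span ℤ {g} ⊔ qT := by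
    have hstep : ∀ (g : _) (i : Fin (k + 2)), ¬ q ∣ n i →
        (n i : ℤ) • s i ∈ Submodule.span ℤ {g} ⊔ qT → s i ∈ Submodule.span ℤ {g} ⊔ qT := by
      intro g i hqi hmem
      have hco : IsCoprime (q : ℤ) (n i : ℤ) := by
        rw [Int.isCoprime_iff_gcd_eq_one]
        exact_mod_cast (Nat.Prime.coprime_iff_not_dvd hq).mpr hqi
      obtain ⟨u, v, huv⟩ := hco
      have hsplit : s i = u • ((q : ℤ) • s i) + v • ((n i : ℤ) • s i) := by
        rw [smul_smul, smul_smul, ← add_smul, huv, one_smul]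
      rw [hsplit]
      exact Submodule.add_mem _
        (Submodule.smul_mem _ _ (Submodule.mem_sup_right (hqTmem _)))
        (Submodule.smul_mem _ _ hmem)
    have hdiv : ∀ (g : _) (i : Fin (k + 2)), q ∣ n i →
        (n i : ℤ) • s i ∈ Submodule.span ℤ {g} ⊔ qT := by
      intro g i hqi
      obtain ⟨t, ht⟩ := hqi
      have : (n i : ℤ) • s i = (q : ℤ) • ((t : ℤ) • s i) := by
        rw [smul_smul, ht]
        push_cast
        ring_nf
      rw [this]
      exact Submodule.mem_sup_right (hqTmem _)
    have hlast : ∀ (g : _) (b : Fin (k + 2)),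
        (∀ j, j ≠ b → s j ∈ Submodule.span ℤ {g} ⊔ qT) →
        s b ∈ Submodule.span ℤ {g} ⊔ qT := by
      intro g b hall
      have hb : s b + ∑ j ∈ Finset.univ.erase b, s j = ∑ j, s j :=
        Finset.add_sum_erase Finset.univ s (Finset.mem_univ b)
      rw [hsum] at hb
      have : s b = -∑ j ∈ Finset.univ.erase b, s j := by
        rw [eq_neg_iff_add_eq_zero]
        exact hb
      rw [this]
      exact Submodule.neg_mem _ (Submodule.sum_mem _ fun j hj =>
        hall j (Finset.mem_erase.mp hj).1)
    by_cases hex : ∃ a : Fin (k + 2), a ≠ 0 ∧ q ∣ n a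
    · obtain ⟨a, ha0, hqa⟩ := hex
      refine ⟨s a, ?_⟩
      have hga : s a ∈ Submodule.span ℤ {s a} ⊔ qT :=
        Submodule.mem_sup_left (Submodule.mem_span_singleton_self _)
      by_cases hq0 : q ∣ n 0
      · -- special pair {0, a}
        have hnj : ∀ j : Fin (k + 2), j ≠ 0 → j ≠ a → ¬ q ∣ n j := by
          intro j hj0 hja hd
          rcases hA j a 0 hd hqa hq0 with h | h | h
          · exact hja h
          · exact hj0 h
          · exact ha0 h
        have hji : ∀ j : Fin (k + 2), j ≠ 0 → s j ∈ Submodule.span ℤ {s a} ⊔ qT := by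
          intro j hj0
          by_cases hja : j = a
          · rw [hja]; exact hga
          · refine hstep _ j (hnj j hj0 hja) ?_
            rw [← hrel j]
            exact hdiv _ 0 hq0
        intro i
        by_cases hi0 : i = 0
        · rw [hi0]
          exact hlast _ 0 hji
        · exact hji i hi0
      · -- q does not divide n 0
        have hs0 : s 0 ∈ Submodule.span ℤ {s a} ⊔ qT := by
          refine hstep _ 0 hq0 ?_
          rw [hrel a]
          exact Submodule.smul_mem _ _ hga
        by_cases hb : ∃ b : Fin (k + 2), b ≠ a ∧ b ≠ 0 ∧ q ∣ n b
        · obtain ⟨b, hba, hb0, hqb⟩ := hb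
          have hnj : ∀ j : Fin (k + 2), j ≠ a → j ≠ b → ¬ q ∣ n j := by
            intro j hja hjb hd
            rcases hA j a b hd hqa hqb with h | h | h
            · exact hja h
            · exact hjb h
            · exact (Ne.symm hba) h
          have hji : ∀ j : Fin (k + 2), j ≠ b → s j ∈ Submodule.span ℤ {s a} ⊔ qT := by
            intro j hjb
            by_cases hja : j = a
            · rw [hja]; exact hga
            by_cases hj0 : j = 0
            · rw [hj0]; exact hs0
            · refine hstep _ j (hnj j hja hjb) ?_
              rw [← hrel j]
              exact Submodule.smul_mem _ _ hs0
          intro i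
          by_cases hib : i = b
          · rw [hib]
            exact hlast _ b hji
          · exact hji i hib
        · push_neg at hb
          intro i
          by_cases hia : i = a
          · rw [hia]; exact hga
          by_cases hi0 : i = 0
          · rw [hi0]; exact hs0
          · refine hstep _ i (hb i hia hi0) ?_
            rw [← hrel i]
            exact Submodule.smul_mem _ _ hs0
    · push_neg at hex
      refine ⟨s 0, ?_⟩
      have hg0 : s 0 ∈ Submodule.span ℤ {s 0} ⊔ qT :=
        Submodule.mem_sup_left (Submodule.mem_span_singleton_self _)
      intro i
      by_cases hi0 : i = 0
      · rw [hi0]; exact hg0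
      · refine hstep _ i (hex i hi0) ?_
        rw [← hrel i]
        exact Submodule.smul_mem _ _ hg0
  obtain ⟨g, hg⟩ := main
  refine ⟨g, fun x => ?_⟩
  have htop : Submodule.span ℤ {g} ⊔ qT = ⊤ := by
    rw [eq_top_iff]
    rintro x -
    obtain ⟨y, rfl⟩ := Submodule.mkQ_surjective R x
    have hy : y = ∑ i, y i • (Pi.single i (1 : ℤ) : Fin (k + 2) → ℤ) := by
      have h1 : ∀ i : Fin (k + 2),
          (Pi.single i (y i) : Fin (k + 2) → ℤ) = y i • (Pi.single i (1 : ℤ) : Fin (k + 2) → ℤ) := by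
        intro i
        rw [← Pi.single_smul, smul_eq_mul, mul_one]
      conv_lhs => rw [← Finset.univ_sum_single y]
      exact Finset.sum_congr rfl fun i _ => h1 i
    rw [hy, map_sum]
    refine Submodule.sum_mem _ fun i _ => ?_
    rw [map_smul]
    exact Submodule.smul_mem _ _ (hg i)
  have hx : x ∈ Submodule.span ℤ {g} ⊔ qT := by rw [htop]; trivial
  obtain ⟨u, hu, w, hw, huw⟩ := Submodule.mem_sup.mp hx
  obtain ⟨z, rfl⟩ := Submodule.mem_span_singleton.mp hu
  obtain ⟨y, hy⟩ := hw
  refine ⟨z, y, ?_⟩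
  rw [← huw, ← hy]
  simp

/-- The abelian group `ℤ^k` modulo the relations `n₁z₁ = n₂z₂ = ⋯ = n_kz_k` and
`z₁ + ⋯ + z_k = 0` (i.e. `H₁` of the double branched cover of the pretzel link
`P(n₁,…,n_k)`) is cyclic iff `D₁ = gcd{Π_{j∉{i,l}} n_j : i < l} = 1`. -/
theorem stmt8 (k : ℕ) (n : Fin (k + 2) → ℕ) (hn : ∀ i, 0 < n i) :
    IsAddCyclic ((Fin (k + 2) → ℤ) ⧸ Submodule.span ℤ
      ((Set.range fun i : Fin (k + 2) =>
          (n 0 : ℤ) • Pi.single (0 : Fin (k + 2)) (1 : ℤ)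
            - (n i : ℤ) • Pi.single i (1 : ℤ))
        ∪ {fun _ => (1 : ℤ)}))
    ↔ Finset.gcd (Finset.univ.filter fun p : Fin (k + 2) × Fin (k + 2) => p.1 < p.2)
        (fun p => ∏ j ∈ (Finset.univ.erase p.1).erase p.2, n j) = 1 :=
  ⟨fun h => pretzel_mp k n hn h, fun h => pretzel_mpr k n hn h⟩
end

section
/- Let A be the k×k integer matrix with rows n₁e₁ − n_{i+1}e_{i+1} (i = 1,…,k−1) and last row (m₁,…,m_k), where 0 < m_i ≤ n_i. Let A' be the matrix obtained from A by replacing the row n₁e₁ − n_j e_j (for some 2 ≤ j ≤ k−1, k ≥ 3) with the row (a−m₁)e₁ − m₂e₂ − ⋯ − m_{j-1}e_{j-1} − b e_j, where 0 ≤ a ≤ m₁+n₁ and 0 ≤ b ≤ n_j. If |det A'| ≥ |det A|, then a = m₁+n₁, b = n_j, and (the configuration forces) j = 2. -/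
set_option maxHeartbeats 1600000


lemma sum_two' {N : ℕ} {M : Type*} [AddCommMonoid M] (f : Fin N → M) (x y : Fin N) (hxy : x ≠ y)
    (h : ∀ c, c ≠ x → c ≠ y → f c = 0) : ∑ c, f c = f x + f y := by
  rw [← Finset.sum_subset (Finset.subset_univ ({x, y} : Finset (Fin N)))
      (fun c _ hc => by
        simp only [Finset.mem_insert, Finset.mem_singleton] at hc
        push_neg at hc
        exact h c hc.1 hc.2)]
  exact Finset.sum_pair hxy

lemma expand_row' {N : ℕ} {R : Type*} [CommRing R] (A : Matrix (Fin N) (Fin N) R) (r : Fin N)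
    (v : Fin N → R) :
    (A.updateRow r v).det = ∑ c, v c * (A.updateRow r (Pi.single c 1)).det := by
  have key : ∀ s : Finset (Fin N),
      (A.updateRow r (∑ c ∈ s, v c • (Pi.single c (1 : R) : Fin N → R))).det
        = ∑ c ∈ s, v c * (A.updateRow r (Pi.single c 1)).det := by
    intro s
    induction s using Finset.induction_on with
    | empty =>
        simp only [Finset.sum_empty]
        exact Matrix.det_eq_zero_of_row_eq_zero r (fun c => by simp)
    | @insert x s hx ih =>
        rw [Finset.sum_insert hx, Matrix.det_updateRow_add, Matrix.det_updateRow_smul, ih,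
          Finset.sum_insert hx]
  have hv : v = ∑ c, v c • (Pi.single c (1 : R) : Fin N → R) := by
    funext t
    simp [Pi.single_apply, Finset.sum_ite_eq', mul_comm]
  conv_lhs => rw [hv]
  exact key Finset.univ


lemma aux_core (k : ℕ) (n m : Fin (k + 3) → ℕ)
    (hm : ∀ i, 0 < m i) (hmn : ∀ i, m i ≤ n i)
    (j : Fin (k + 3)) (hj1 : 1 ≤ j.val) (hj2 : j.val ≤ k + 1)
    (a b : ℤ) (ha0 : 0 ≤ a) (ha : a ≤ (m 0 : ℤ) + (n 0 : ℤ))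
    (hb0 : 0 ≤ b) (hb : b ≤ (n j : ℤ))
    (D : Fin (k + 3) → ℤ)
    (hrel : ∀ c, c ≠ j → (n c : ℤ) * D c = (n 0 : ℤ) * D 0)
    (hlast : ∑ c, (m c : ℤ) * D c = 0)
    (dA dA' : ℤ)
    (hdAv : dA = (n 0 : ℤ) * D 0 - (n j : ℤ) * D j)
    (hdA'v : dA' = (a - (m 0 : ℤ)) * D 0 -
      (∑ c ∈ Finset.univ.filter (fun c : Fin (k + 3) => 0 < c.val ∧ c.val < j.val),
        (m c : ℤ) * D c) - b * D j)
    (hD0 : 0 ≤ D 0) (hdA0 : dA ≠ 0)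
    (hdet : dA.natAbs ≤ dA'.natAbs) :
    a = (m 0 : ℤ) + (n 0 : ℤ) ∧ b = (n j : ℤ) ∧ j.val = 1 := by
  classical
  set F : Finset (Fin (k + 3)) :=
    Finset.univ.filter (fun c : Fin (k + 3) => 0 < c.val ∧ c.val < j.val) with hF
  have hj0 : (0 : Fin (k + 3)) ≠ j := by
    intro h; rw [← h] at hj1; simp at hj1
  have hnpos : ∀ c : Fin (k + 3), (0 : ℤ) < (n c : ℤ) := by
    intro c; exact_mod_cast lt_of_lt_of_le (hm c) (hmn c)
  have hmpos : ∀ c : Fin (k + 3), (0 : ℤ) < (m c : ℤ) := by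
    intro c; exact_mod_cast hm c
  have hsplit : (m j : ℤ) * D j + ∑ c ∈ Finset.univ.erase j, (m c : ℤ) * D c
      = ∑ c : Fin (k + 3), (m c : ℤ) * D c :=
    Finset.add_sum_erase _ (fun c => (m c : ℤ) * D c) (Finset.mem_univ j)
  -- D 0 is strictly positive, else dA = 0
  have hD0' : 0 < D 0 := by
    rcases lt_or_eq_of_le hD0 with h | h
    · exact h
    · exfalso
      have hall : ∀ c, c ≠ j → D c = 0 := by
        intro c hc
        have hh := hrel c hc
        rw [← h] at hh
        simp only [mul_zero] at hh
        exact (mul_eq_zero.mp hh).resolve_left (hnpos c).ne'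
      have hz : ∑ c ∈ Finset.univ.erase j, (m c : ℤ) * D c = 0 :=
        Finset.sum_eq_zero (fun c hc => by
          rw [hall c (Finset.ne_of_mem_erase hc)]; ring)
      have hDj : D j = 0 := by
        have hmj : (m j : ℤ) * D j = 0 := by
          rw [hlast] at hsplit; linarith
        exact (mul_eq_zero.mp hmj).resolve_left (hmpos j).ne'
      apply hdA0
      rw [hdAv, hDj, ← h]; ring
  have hDc : ∀ c : Fin (k + 3), c ≠ j → 0 < D c := by
    intro c hc
    have h1 := hrel c hc
    by_contra hcon
    push_neg at hcon
    have h2 := mul_nonpos_of_nonneg_of_nonpos (hnpos c).le hcon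
    linarith [mul_pos (hnpos 0) hD0']
  have herasepos : 0 < ∑ c ∈ Finset.univ.erase j, (m c : ℤ) * D c := by
    apply Finset.sum_pos
    · intro c hc
      exact mul_pos (hmpos c) (hDc c (Finset.ne_of_mem_erase hc))
    · exact ⟨0, Finset.mem_erase.mpr ⟨hj0, Finset.mem_univ 0⟩⟩
  have hDj : D j < 0 := by
    by_contra hcon
    push_neg at hcon
    have h2 := mul_nonneg (hmpos j).le hcon
    rw [hlast] at hsplit
    linarith
  have h0F : (0 : Fin (k + 3)) ∉ F := by simp [hF]
  have hFsub : insert (0 : Fin (k + 3)) F ⊆ Finset.univ.erase j := by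
    intro c hc
    rcases Finset.mem_insert.mp hc with h | h
    · exact h ▸ Finset.mem_erase.mpr ⟨hj0, Finset.mem_univ 0⟩
    · simp only [hF, Finset.mem_filter] at h
      exact Finset.mem_erase.mpr ⟨Fin.ne_of_val_ne (by omega), Finset.mem_univ c⟩
  have hins : ∑ c ∈ insert (0 : Fin (k + 3)) F, (m c : ℤ) * D c
      = (m 0 : ℤ) * D 0 + ∑ c ∈ F, (m c : ℤ) * D c := Finset.sum_insert h0F
  have hsub_le : ∑ c ∈ insert (0 : Fin (k + 3)) F, (m c : ℤ) * D c
      ≤ ∑ c ∈ Finset.univ.erase j, (m c : ℤ) * D c := by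
    apply Finset.sum_le_sum_of_subset_of_nonneg hFsub
    intro c hc _
    exact le_of_lt (mul_pos (hmpos c) (hDc c (Finset.ne_of_mem_erase hc)))
  have hS_le : (m 0 : ℤ) * D 0 + ∑ c ∈ F, (m c : ℤ) * D c
      ≤ ∑ c ∈ Finset.univ.erase j, (m c : ℤ) * D c := by linarith
  have hSnonneg : 0 ≤ ∑ c ∈ F, (m c : ℤ) * D c := by
    apply Finset.sum_nonneg
    intro c hc
    simp only [hF, Finset.mem_filter] at hc
    exact le_of_lt (mul_pos (hmpos c) (hDc c (Fin.ne_of_val_ne (by omega))))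
  have hmn0 : (m 0 : ℤ) ≤ (n 0 : ℤ) := by exact_mod_cast hmn 0
  have hmnj : (m j : ℤ) ≤ (n j : ℤ) := by exact_mod_cast hmn j
  have hkey : ∑ c ∈ F, (m c : ℤ) * D c < -((n j : ℤ) * D j) := by
    have h1 : (n j : ℤ) * D j ≤ (m j : ℤ) * D j :=
      mul_le_mul_of_nonpos_right hmnj hDj.le
    have h2 : (m j : ℤ) * D j + ∑ c ∈ Finset.univ.erase j, (m c : ℤ) * D c = 0 := by
      rw [hlast] at hsplit; exact hsplit
    linarith [mul_pos (hmpos 0) hD0']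
  have hdApos : 0 < dA := by
    rw [hdAv]
    linarith [mul_pos (hnpos 0) hD0', mul_pos (hnpos j) (neg_pos.mpr hDj)]
  have hupper : dA' ≤ dA - ∑ c ∈ F, (m c : ℤ) * D c := by
    rw [hdAv, hdA'v]
    have h1 : 0 ≤ ((n 0 : ℤ) - (a - (m 0 : ℤ))) * D 0 :=
      mul_nonneg (by linarith) hD0'.le
    have h2 : ((n j : ℤ) - b) * D j ≤ 0 :=
      mul_nonpos_of_nonneg_of_nonpos (by linarith) hDj.le
    linarith
  have hlower : -dA < dA' := by
    rw [hdAv, hdA'v]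
    have h1 : ((m 0 : ℤ) - a) * D 0 ≤ (n 0 : ℤ) * D 0 :=
      mul_le_mul_of_nonneg_right (by linarith) hD0'.le
    have h2 : b * D j ≤ 0 := mul_nonpos_of_nonneg_of_nonpos hb0 hDj.le
    linarith
  have habs : |dA'| ≤ dA := abs_le.mpr ⟨by linarith, by linarith⟩
  have habs2 : |dA| ≤ |dA'| := by
    rw [Int.abs_eq_natAbs, Int.abs_eq_natAbs]
    exact_mod_cast hdet
  have hdAeq : dA' = dA := by
    have h1 : |dA'| = dA := le_antisymm habs (by rw [abs_of_pos hdApos] at habs2; exact habs2)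
    rcases (abs_eq hdApos.le).mp h1 with h | h
    · exact h
    · exfalso; rw [h] at hlower; exact lt_irrefl _ hlower
  have hS0 : ∑ c ∈ F, (m c : ℤ) * D c = 0 := by
    rw [hdAeq] at hupper; linarith
  have hjval : j.val = 1 := by
    by_contra hj
    have hj2' : 2 ≤ j.val := by omega
    have hmem : (⟨1, by omega⟩ : Fin (k + 3)) ∈ F := by
      refine Finset.mem_filter.mpr ⟨Finset.mem_univ _, ?_, ?_⟩ <;> simp
      omega
    have hpos : 0 < (m (⟨1, by omega⟩ : Fin (k + 3)) : ℤ) * D ⟨1, by omega⟩ :=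
      mul_pos (hmpos _) (hDc _ (Fin.ne_of_val_ne (by simp; omega)))
    have hsle : (m (⟨1, by omega⟩ : Fin (k + 3)) : ℤ) * D ⟨1, by omega⟩
        ≤ ∑ c ∈ F, (m c : ℤ) * D c :=
      Finset.single_le_sum (f := fun c => (m c : ℤ) * D c)
        (fun c hc => le_of_lt (mul_pos (hmpos c) (hDc c (by
          simp only [hF, Finset.mem_filter] at hc
          exact Fin.ne_of_val_ne (by omega))))) hmem
    linarith
  have heq : ((n 0 : ℤ) + (m 0 : ℤ) - a) * D 0 + ((n j : ℤ) - b) * (-D j) = 0 := by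
    have hh := hdAeq
    rw [hdAv, hdA'v, hS0] at hh
    linear_combination -hh
  have h1 : 0 ≤ ((n 0 : ℤ) + (m 0 : ℤ) - a) * D 0 := mul_nonneg (by linarith) hD0'.le
  have h2 : 0 ≤ ((n j : ℤ) - b) * (-D j) := mul_nonneg (by linarith) (by linarith)
  have e1 : ((n 0 : ℤ) + (m 0 : ℤ) - a) * D 0 = 0 := by linarith
  have e2 : ((n j : ℤ) - b) * (-D j) = 0 := by linarith
  have c1 := (mul_eq_zero.mp e1).resolve_right hD0'.ne'
  have c2 := (mul_eq_zero.mp e2).resolve_right (by simpa using hDj.ne)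
  exact ⟨by linarith, by linarith, hjval⟩


set_option maxHeartbeats 1600000 in

set_option maxHeartbeats 1600000 in
/-- Determinant comparison at the heart of Theorem 9 (GKH conjecture for Montesinos links).
`A` is the `K×K` matrix (`K = k+3 ≥ 3`) with rows `n₁e₁ − n_{i+1}e_{i+1}` and last row
`(m₁,…,m_K)`, where `0 < m_i ≤ n_i`.  Replacing the row `n₁e₁ − n_je_j` (here `j` is a
0-indexed column with `1 ≤ j ≤ K−2`, i.e. paper index `2 ≤ j ≤ k−1`) by
`(a−m₁)e₁ − m₂e₂ − ⋯ − m_{j-1}e_{j-1} − b·e_j` with `0 ≤ a ≤ m₁+n₁`, `0 ≤ b ≤ n_j`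
cannot keep `|det|` at least `|det A|` unless `a = m₁+n₁`, `b = n_j` and `j = 2`
(0-indexed: `j.val = 1`). -/
theorem stmt19 (k : ℕ) (n m : Fin (k + 3) → ℕ)
    (hm : ∀ i, 0 < m i) (hmn : ∀ i, m i ≤ n i)
    (A : Matrix (Fin (k + 3)) (Fin (k + 3)) ℤ)
    (hA : ∀ i j, A i j =
      if i.val = k + 2 then (m j : ℤ)
      else if j.val = 0 then (n 0 : ℤ)
      else if j.val = i.val + 1 then -(n j : ℤ)
      else 0)
    (j : Fin (k + 3)) (hj1 : 1 ≤ j.val) (hj2 : j.val ≤ k + 1)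
    (a b : ℤ) (ha0 : 0 ≤ a) (ha : a ≤ (m 0 : ℤ) + (n 0 : ℤ))
    (hb0 : 0 ≤ b) (hb : b ≤ (n j : ℤ))
    (A' : Matrix (Fin (k + 3)) (Fin (k + 3)) ℤ)
    (hA' : A' = A.updateRow ⟨j.val - 1, by omega⟩
      (fun c => if c.val = 0 then a - (m 0 : ℤ)
        else if c.val < j.val then -(m c : ℤ)
        else if c = j then -b
        else 0))
    (hdet : A.det.natAbs ≤ A'.det.natAbs) :
    a = (m 0 : ℤ) + (n 0 : ℤ) ∧ b = (n j : ℤ) ∧ j.val = 1 := by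
  classical
  set r : Fin (k + 3) := ⟨j.val - 1, by omega⟩ with hr
  set D : Fin (k + 3) → ℤ := fun c => (A.updateRow r (Pi.single c 1)).det with hD
  have hrv : r.val = j.val - 1 := rfl
  have hnpos : ∀ c : Fin (k + 3), (0 : ℤ) < (n c : ℤ) := by
    intro c; exact_mod_cast lt_of_lt_of_le (hm c) (hmn c)
  have hmpos : ∀ c : Fin (k + 3), (0 : ℤ) < (m c : ℤ) := by
    intro c; exact_mod_cast hm c
  have hj0 : (0 : Fin (k + 3)) ≠ j := by
    intro h; rw [← h] at hj1; simp at hj1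
  -- generic row expansion for non-last rows
  have hrowsum : ∀ (w : Fin (k + 3) → ℤ) (i : Fin (k + 3)) (hi : i.val ≤ k + 1),
      ∑ c, A i c * w c
        = (n 0 : ℤ) * w 0 - (n ⟨i.val + 1, by omega⟩ : ℤ) * w ⟨i.val + 1, by omega⟩ := by
    intro w i hi
    have hne : (0 : Fin (k + 3)) ≠ (⟨i.val + 1, by omega⟩ : Fin (k + 3)) := by
      intro h
      have := congrArg Fin.val h
      simp at this
    rw [sum_two' (fun c => A i c * w c) 0 ⟨i.val + 1, by omega⟩ hne (fun c hc0 hcx => by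
      have hc0' : c.val ≠ 0 := fun h => hc0 (Fin.ext (by simpa using h))
      have hcx' : c.val ≠ i.val + 1 := fun h => hcx (Fin.ext (by simpa using h))
      show A i c * w c = 0
      rw [hA]
      rw [if_neg (by omega), if_neg hc0', if_neg hcx', zero_mul])]
    have h1 : A i 0 = (n 0 : ℤ) := by
      rw [hA]
      rw [if_neg (by omega)]
      simp
    have h2 : A i ⟨i.val + 1, by omega⟩ = -(n ⟨i.val + 1, by omega⟩ : ℤ) := by
      rw [hA]
      rw [if_neg (by omega), if_neg (by simp), if_pos (by simp)]
    rw [h1, h2]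
    ring
  -- last row expansion
  have hlastrow : ∀ (w : Fin (k + 3) → ℤ),
      ∑ c, A ⟨k + 2, by omega⟩ c * w c = ∑ c, (m c : ℤ) * w c := by
    intro w
    apply Finset.sum_congr rfl
    intro c _
    rw [hA, if_pos rfl]
  -- the cofactor relations
  have hzero : ∀ i : Fin (k + 3), i ≠ r → ∑ c, A i c * D c = 0 := by
    intro i hir
    have h0 : (A.updateRow r (A i)).det = 0 :=
      Matrix.det_zero_of_row_eq hir
        ((Matrix.updateRow_ne hir).trans (Matrix.updateRow_self).symm)
    rw [expand_row'] at h0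
    exact h0
  have hrel : ∀ c : Fin (k + 3), c ≠ j → (n c : ℤ) * D c = (n 0 : ℤ) * D 0 := by
    intro c hc
    rcases Nat.eq_zero_or_pos c.val with h0 | h0
    · have : c = 0 := Fin.ext (by simpa using h0)
      rw [this]
    · have hcv : c.val ≠ j.val := fun h => hc (Fin.ext h)
      have hi : ((⟨c.val - 1, by omega⟩ : Fin (k + 3))).val ≤ k + 1 := by
        simp; omega
      have hir : (⟨c.val - 1, by omega⟩ : Fin (k + 3)) ≠ r := by
        intro h
        have := congrArg Fin.val h
        rw [hrv] at this
        simp at this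
        omega
      have h1 := hzero ⟨c.val - 1, by omega⟩ hir
      rw [hrowsum D ⟨c.val - 1, by omega⟩ hi] at h1
      have hcc : (⟨(⟨c.val - 1, by omega⟩ : Fin (k + 3)).val + 1, by omega⟩ : Fin (k + 3)) = c :=
        Fin.ext (by simp; omega)
      rw [hcc] at h1
      linarith
  have hlast : ∑ c, (m c : ℤ) * D c = 0 := by
    have hir : (⟨k + 2, by omega⟩ : Fin (k + 3)) ≠ r := by
      intro h
      have := congrArg Fin.val h
      rw [hrv] at this
      simp at this
      omega
    rw [← hlastrow D]
    exact hzero _ hir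
  -- determinant of A
  have hAdet : A.det = (n 0 : ℤ) * D 0 - (n j : ℤ) * D j := by
    have h := expand_row' A r (A r)
    rw [Matrix.updateRow_eq_self] at h
    rw [h, hrowsum D r (by omega)]
    have hrj : (⟨r.val + 1, by omega⟩ : Fin (k + 3)) = j :=
      Fin.ext (show r.val + 1 = j.val by omega)
    rw [hrj]
  -- determinant of A'
  have hA'det : A'.det = (a - (m 0 : ℤ)) * D 0 -
      (∑ c ∈ Finset.univ.filter (fun c : Fin (k + 3) => 0 < c.val ∧ c.val < j.val),
        (m c : ℤ) * D c) - b * D j := by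
    have hexp : A'.det = ∑ c, (if c.val = 0 then a - (m 0 : ℤ)
        else if c.val < j.val then -(m c : ℤ)
        else if c = j then -b else 0) * D c := by
      rw [hA']
      exact expand_row' A r _
    rw [hexp]
    set F : Finset (Fin (k + 3)) :=
      Finset.univ.filter (fun c : Fin (k + 3) => 0 < c.val ∧ c.val < j.val) with hF
    have h0F : (0 : Fin (k + 3)) ∉ F := by simp [hF]
    have hjF : j ∉ F := by simp [hF]
    have h0jF : (0 : Fin (k + 3)) ∉ insert j F := by
      simp only [Finset.mem_insert]
      push_neg
      exact ⟨hj0, h0F⟩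
    have hsub : ∑ c, (if c.val = 0 then a - (m 0 : ℤ)
        else if c.val < j.val then -(m c : ℤ)
        else if c = j then -b else 0) * D c
        = ∑ c ∈ insert (0 : Fin (k + 3)) (insert j F), (if c.val = 0 then a - (m 0 : ℤ)
        else if c.val < j.val then -(m c : ℤ)
        else if c = j then -b else 0) * D c := by
      refine (Finset.sum_subset (Finset.subset_univ _) ?_).symm
      intro x _ hx
      simp only [Finset.mem_insert] at hx
      push_neg at hx
      obtain ⟨hx0, hxj, hxF⟩ := hx
      have hx0' : x.val ≠ 0 := fun h => hx0 (Fin.ext (by simpa using h))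
      have hxlt : ¬(x.val < j.val) := by
        intro hlt
        exact hxF (by simp only [hF, Finset.mem_filter, Finset.mem_univ, true_and]; omega)
      rw [if_neg hx0', if_neg hxlt, if_neg hxj, zero_mul]
    rw [hsub, Finset.sum_insert h0jF, Finset.sum_insert hjF]
    have e0 : (if (0 : Fin (k + 3)).val = 0 then a - (m 0 : ℤ)
        else if (0 : Fin (k + 3)).val < j.val then -(m 0 : ℤ)
        else if (0 : Fin (k + 3)) = j then -b else 0) = a - (m 0 : ℤ) := by
      simp
    have ej : (if j.val = 0 then a - (m 0 : ℤ)
        else if j.val < j.val then -(m j : ℤ)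
        else if j = j then -b else 0) = -b := by
      rw [if_neg (by omega), if_neg (by omega), if_pos rfl]
    rw [e0, ej]
    have eF : ∑ c ∈ F, (if c.val = 0 then a - (m 0 : ℤ)
        else if c.val < j.val then -(m c : ℤ)
        else if c = j then -b else 0) * D c
        = ∑ c ∈ F, -((m c : ℤ) * D c) := by
      refine Finset.sum_congr rfl ?_
      intro c hc
      simp only [hF, Finset.mem_filter] at hc
      rw [if_neg (by omega), if_pos (by omega)]
      ring
    rw [eF, Finset.sum_neg_distrib]
    ring
  -- A is nonsingular
  have hdetne : A.det ≠ 0 := by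
    intro h
    obtain ⟨v, hv0, hv⟩ := Matrix.exists_mulVec_eq_zero_iff.mpr h
    have hvi : ∀ i : Fin (k + 3), ∑ c, A i c * v c = 0 := by
      intro i
      have := congrFun hv i
      simpa [Matrix.mulVec, dotProduct] using this
    have hvrel : ∀ c : Fin (k + 3), (n c : ℤ) * v c = (n 0 : ℤ) * v 0 := by
      intro c
      rcases Nat.eq_zero_or_pos c.val with h0 | h0
      · rw [show c = 0 from Fin.ext (by simpa using h0)]
      · have hi : ((⟨c.val - 1, by omega⟩ : Fin (k + 3))).val ≤ k + 1 := by
          simp; omega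
        have h1 := hvi ⟨c.val - 1, by omega⟩
        rw [hrowsum v ⟨c.val - 1, by omega⟩ hi] at h1
        have hcc : (⟨(⟨c.val - 1, by omega⟩ : Fin (k + 3)).val + 1, by omega⟩
            : Fin (k + 3)) = c := Fin.ext (by simp; omega)
        rw [hcc] at h1
        linarith
    have hvlast : ∑ c, (m c : ℤ) * v c = 0 := by
      rw [← hlastrow v]
      exact hvi _
    rcases lt_trichotomy (v 0) 0 with h0 | h0 | h0
    · have hneg : ∀ c, v c < 0 := by
        intro c
        by_contra hcon
        push_neg at hcon
        have h2 := mul_nonneg (hnpos c).le hcon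
        have h3 := mul_neg_of_pos_of_neg (hnpos 0) h0
        linarith [hvrel c]
      have hpos : 0 < ∑ c, -((m c : ℤ) * v c) :=
        Finset.sum_pos (fun c _ => by
          have := mul_pos (hmpos c) (neg_pos.mpr (hneg c))
          linarith) Finset.univ_nonempty
      rw [Finset.sum_neg_distrib, hvlast] at hpos
      simp at hpos
    · apply hv0
      funext c
      have hc := hvrel c
      rw [h0, mul_zero] at hc
      show v c = (0 : Fin (k + 3) → ℤ) c
      rw [Pi.zero_apply]
      exact (mul_eq_zero.mp hc).resolve_left (hnpos c).ne'
    · have hposc : ∀ c, 0 < v c := by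
        intro c
        by_contra hcon
        push_neg at hcon
        have h2 := mul_nonpos_of_nonneg_of_nonpos (hnpos c).le hcon
        have h3 := mul_pos (hnpos 0) h0
        linarith [hvrel c]
      have hpos : 0 < ∑ c, (m c : ℤ) * v c :=
        Finset.sum_pos (fun c _ => mul_pos (hmpos c) (hposc c)) Finset.univ_nonempty
      rw [hvlast] at hpos
      exact lt_irrefl _ hpos
  -- conclude using the arithmetic core, splitting on the sign of D 0
  rcases le_or_gt 0 (D 0) with hsign | hsign
  · exact aux_core k n m hm hmn j hj1 hj2 a b ha0 ha hb0 hb D hrel hlast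
      A.det A'.det hAdet hA'det hsign hdetne hdet
  · refine aux_core k n m hm hmn j hj1 hj2 a b ha0 ha hb0 hb (fun c => -D c)
      (fun c hc => by
        have := hrel c hc
        simp only [mul_neg]
        linarith)
      (by
        simp only [mul_neg]
        rw [Finset.sum_neg_distrib, hlast, neg_zero])
      (-A.det) (-A'.det)
      (by rw [hAdet]; ring)
      (by
        rw [hA'det]
        simp only [mul_neg]
        rw [Finset.sum_neg_distrib]
        ring)
      (by show 0 ≤ -D 0; linarith)
      (neg_ne_zero.mpr hdetne)
      (by simpa [Int.natAbs_neg] using hdet)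
end
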